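/- arXiv:2001.09836 — 7 statements merged into one kernel-verified Lean document; each statement's English description precedes it below -/
import Mathlib

section
/- For every integer k ≥ 1, a_{2,2k} = k·2^{2k} + k·binom(2k,k) and a_{2,2k+1} = (2k+1)·2^{2k} + (2k+1)·binom(2k,k). -/
open Finset

lemma sub_mul_choose {m i : ℕ} (h : i < m) :
    (m - i) * m.choose i = m * (m - 1).choose i := by
  obtain ⟨n, rfl⟩ : ∃ n, m = n + 1 := ⟨m - 1, by omega⟩
  have hi : i ≤ n := by omega
  have h2 := Nat.add_one_mul_choose_eq n (n - i)
  rw [Nat.choose_symm hi, show n - i + 1 = n + 1 - i by omega,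
    Nat.choose_symm (by omega : i ≤ n + 1)] at h2
  rw [Nat.add_sub_cancel, h2, mul_comm]

lemma half_sum_even (k : ℕ) :
    2 * ∑ i ∈ range (k + 1), (2 * k).choose i = 4 ^ k + (2 * k).choose k := by
  have hfull : ∑ i ∈ range (2 * k + 1), (2 * k).choose i = 4 ^ k := by
    rw [Nat.sum_range_choose, pow_mul]; norm_num
  rw [show 2 * k + 1 = k + (k + 1) by omega, Finset.sum_range_add] at hfull
  have hrefl : ∑ j ∈ range (k + 1), (2 * k).choose (k + j)
      = ∑ j ∈ range (k + 1), (2 * k).choose j := by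
    rw [← Finset.sum_range_reflect]
    refine Finset.sum_congr rfl fun j hj => ?_
    simp only [Finset.mem_range] at hj
    rw [show k + (k + 1 - 1 - j) = 2 * k - j by omega,
      Nat.choose_symm (by omega : j ≤ 2 * k)]
  rw [hrefl] at hfull
  have hlast : ∑ i ∈ range (k + 1), (2 * k).choose i
      = (∑ i ∈ range k, (2 * k).choose i) + (2 * k).choose k := Finset.sum_range_succ _ _
  omega

lemma a2_eq (m : ℕ) :
    (∑ r ∈ Finset.Nat.antidiagonalTuple 2 m,
      Nat.multinomial Finset.univ r * Finset.univ.sup r)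
    = ∑ i ∈ range (m + 1), m.choose i * max i (m - i) := by
  rw [Finset.Nat.antidiagonalTuple_two, Finset.sum_map,
    Finset.Nat.sum_antidiagonal_eq_sum_range_succ_mk]
  refine Finset.sum_congr rfl fun i hi => ?_
  simp only [Finset.mem_range] at hi
  have hle : i ≤ m := Nat.lt_succ_iff.mp hi
  have h1 : ((piFinTwoEquiv fun _ => ℕ).symm.toEmbedding (i, m - i)) = ![i, m - i] := by
    ext x; fin_cases x <;> rfl
  rw [h1, Nat.multinomial_univ_two, ← Nat.add_choose, Nat.add_sub_cancel' hle,
    Nat.choose_symm hle]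
  congr 1
  have : (Finset.univ : Finset (Fin 2)) = {0, 1} := by decide
  rw [this, Finset.sup_insert, Finset.sup_singleton]
  simp

lemma S_even (k : ℕ) (hk : 1 ≤ k) :
    ∑ i ∈ range (2 * k + 1), (2 * k).choose i * max i (2 * k - i)
      = k * 2 ^ (2 * k) + k * (2 * k).choose k := by
  rw [show 2 * k + 1 = k + (k + 1) by omega, Finset.sum_range_add]
  have h1 : ∑ i ∈ range k, (2 * k).choose i * max i (2 * k - i)
      = ∑ i ∈ range k, 2 * k * (2 * k - 1).choose i := by
    refine Finset.sum_congr rfl fun i hi => ?_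
    simp only [Finset.mem_range] at hi
    rw [max_eq_right (by omega), mul_comm ((2*k).choose i), sub_mul_choose (by omega)]
  have h2 : ∑ j ∈ range (k + 1), (2 * k).choose (k + j) * max (k + j) (2 * k - (k + j))
      = ∑ j ∈ range (k + 1), (2 * k).choose j * (2 * k - j) := by
    rw [← Finset.sum_range_reflect]
    refine Finset.sum_congr rfl fun j hj => ?_
    simp only [Finset.mem_range] at hj
    rw [show k + (k + 1 - 1 - j) = 2 * k - j by omega,
      Nat.choose_symm (by omega : j ≤ 2 * k)]
    congr 1
    omega
  rw [h1, h2, Finset.sum_range_succ, show 2 * k - k = k by omega]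
  have h3 : ∑ j ∈ range k, (2 * k).choose j * (2 * k - j)
      = ∑ i ∈ range k, 2 * k * (2 * k - 1).choose i := by
    refine Finset.sum_congr rfl fun i hi => ?_
    simp only [Finset.mem_range] at hi
    rw [mul_comm ((2*k).choose i), sub_mul_choose (by omega)]
  rw [h3, ← Finset.mul_sum]
  have h4 : ∑ i ∈ range k, (2 * k - 1).choose i = 4 ^ (k - 1) := by
    have := Nat.sum_range_choose_halfway (k - 1)
    rw [show 2 * (k - 1) + 1 = 2 * k - 1 by omega, show k - 1 + 1 = k by omega] at this
    exact this
  rw [h4]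
  have : (2:ℕ) ^ (2 * k) = 4 ^ k := by rw [pow_mul]; norm_num
  rw [this]
  have h5 : (4:ℕ) ^ k = 4 * 4 ^ (k - 1) := by
    rw [← pow_succ']; congr 1; omega
  rw [h5]; ring

lemma S_odd (k : ℕ) :
    ∑ i ∈ range (2 * k + 1 + 1), (2 * k + 1).choose i * max i (2 * k + 1 - i)
      = (2 * k + 1) * 2 ^ (2 * k) + (2 * k + 1) * (2 * k).choose k := by
  rw [show 2 * k + 1 + 1 = (k + 1) + (k + 1) by omega, Finset.sum_range_add]
  have h1 : ∑ i ∈ range (k + 1), (2 * k + 1).choose i * max i (2 * k + 1 - i)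
      = ∑ i ∈ range (k + 1), (2 * k + 1) * (2 * k).choose i := by
    refine Finset.sum_congr rfl fun i hi => ?_
    simp only [Finset.mem_range] at hi
    rw [max_eq_right (by omega), mul_comm ((2*k+1).choose i)]
    have := sub_mul_choose (m := 2 * k + 1) (i := i) (by omega)
    simpa using this
  have h2 : ∑ j ∈ range (k + 1),
        (2 * k + 1).choose (k + 1 + j) * max (k + 1 + j) (2 * k + 1 - (k + 1 + j))
      = ∑ i ∈ range (k + 1), (2 * k + 1) * (2 * k).choose i := by
    rw [← Finset.sum_range_reflect]
    refine Finset.sum_congr rfl fun j hj => ?_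
    simp only [Finset.mem_range] at hj
    rw [show k + 1 + (k + 1 - 1 - j) = 2 * k + 1 - j by omega,
      Nat.choose_symm (by omega : j ≤ 2 * k + 1),
      max_eq_left (by omega), mul_comm ((2*k+1).choose j)]
    have := sub_mul_choose (m := 2 * k + 1) (i := j) (by omega)
    simpa using this
  rw [h1, h2, ← two_mul, ← Finset.mul_sum, ← mul_assoc, mul_comm 2 (2*k+1), mul_assoc,
    Finset.mul_sum, ← Finset.mul_sum, half_sum_even]
  have : (2:ℕ) ^ (2 * k) = 4 ^ k := by rw [pow_mul]; norm_num
  rw [this]; ring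


/-- `a n k = Σ_{r_1+⋯+r_n = k} (k! / (r_1! ⋯ r_n!)) · max_j r_j`. -/
def a (n k : ℕ) : ℕ :=
  ∑ r ∈ Finset.Nat.antidiagonalTuple n k,
    Nat.multinomial Finset.univ r * Finset.univ.sup r

theorem stmt6 (k : ℕ) (hk : 1 ≤ k) :
    a 2 (2 * k) = k * 2 ^ (2 * k) + k * Nat.choose (2 * k) k ∧
    a 2 (2 * k + 1) = (2 * k + 1) * 2 ^ (2 * k) + (2 * k + 1) * Nat.choose (2 * k) k := by
  constructor
  · rw [a, a2_eq]; exact S_even k hk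
  · rw [a, a2_eq]; exact S_odd k
end

section
/- For every integer k ≥ 3, the sequence (a_{2,k}) satisfies the recurrence a_{2,k} = 2·(k/(k−1))·a_{2,k−1} + 4·((k−3)/(k−2))·a_{2,k−2} − 8·a_{2,k−3} (an identity of rational numbers). -/
lemma a_two (k : ℕ) :
    a 2 k = ∑ i ∈ Finset.range (k + 1), k.choose i * max i (k - i) := by
  rw [a, Finset.Nat.antidiagonalTuple_two, Finset.sum_map,
    Finset.Nat.sum_antidiagonal_eq_sum_range_succ_mk]
  refine Finset.sum_congr rfl fun i hi => ?_
  simp only [Finset.mem_range] at hi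
  have h1 : (Finset.univ : Finset (Fin 2)) = {0, 1} := by decide
  have h2 : ((piFinTwoEquiv fun _ => ℕ).symm.toEmbedding (i, k - i)) = ![i, k - i] := by
    ext x; fin_cases x <;> rfl
  rw [h2, h1, Nat.binomial_eq_choose (by decide)]
  have : i + (k - i) = k := by omega
  simp [this]

lemma sum_id_mul_choose (n : ℕ) :
    ∑ i ∈ Finset.range (n + 1), i * n.choose i = n * 2 ^ (n - 1) := by
  cases n with
  | zero => simp
  | succ n =>
    rw [Finset.sum_range_succ']
    simp only [zero_mul, add_zero]
    have h : ∀ i, (i + 1) * (n + 1).choose (i + 1) = (n + 1) * n.choose i := fun i => by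
      rw [mul_comm ((i:ℕ)+1), Nat.add_one_mul_choose_eq n i, mul_comm]
    calc ∑ i ∈ Finset.range (n + 1), (i + 1) * (n + 1).choose (i + 1)
        = ∑ i ∈ Finset.range (n + 1), (n + 1) * n.choose i := by
          exact Finset.sum_congr rfl fun i _ => h i
      _ = (n + 1) * 2 ^ n := by rw [← Finset.mul_sum, Nat.sum_range_choose]
      _ = (n + 1) * 2 ^ (n + 1 - 1) := by simp

lemma sum_trunc (k : ℕ) (hk : 1 ≤ k) :
    ((∑ i ∈ Finset.range (k + 1), k.choose i * (k - 2 * i) : ℕ) : ℚ)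
      = (k : ℚ) * (k - 1).choose ((k - 1) / 2) := by
  set m := (k - 1) / 2 with hm
  have hsub : ∑ i ∈ Finset.range (k + 1), k.choose i * (k - 2 * i)
      = ∑ i ∈ Finset.range (m + 1), k.choose i * (k - 2 * i) := by
    refine (Finset.sum_subset ?_ ?_).symm
    · intro i hi; simp only [Finset.mem_range] at *; omega
    · intro i h1 h2; simp only [Finset.mem_range] at *
      have : k - 2 * i = 0 := by omega
      simp [this]
  rw [hsub, Nat.cast_sum, Finset.sum_range_succ']
  have key : ∀ i < m,
      ((k.choose (i + 1) * (k - 2 * (i + 1)) : ℕ) : ℚ)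
        = (k : ℚ) * (k - 1).choose (i + 1) - (k : ℚ) * (k - 1).choose i := by
    intro i hi
    have hik : 2 * (i + 1) ≤ k - 1 := by omega
    have e1 : (i + 1) * k.choose (i + 1) = k * (k - 1).choose i := by
      have h := Nat.add_one_mul_choose_eq (k - 1) i
      rw [Nat.sub_add_cancel hk] at h
      rw [mul_comm]; exact h.symm
    have e2 : (k - i - 1) * k.choose (i + 1) = k * (k - 1).choose (i + 1) := by
      have h1 := Nat.add_one_mul_choose_eq (k - 1) (k - i - 2)
      rw [Nat.sub_add_cancel hk] at h1
      rw [show k - i - 2 + 1 = k - i - 1 by omega] at h1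
      rw [show k - i - 1 = k - (i + 1) by omega,
        Nat.choose_symm (by omega : i + 1 ≤ k)] at h1
      rw [show k - i - 2 = (k - 1) - (i + 1) by omega,
        Nat.choose_symm (by omega : i + 1 ≤ k - 1)] at h1
      rw [show k - i - 1 = k - (i + 1) by omega, mul_comm]
      exact h1.symm
    have c1 : ((i : ℚ) + 1) * k.choose (i + 1) = (k : ℚ) * (k - 1).choose i := by
      exact_mod_cast congrArg (Nat.cast : ℕ → ℚ) e1
    have c2 : ((k : ℚ) - i - 1) * k.choose (i + 1) = (k : ℚ) * (k - 1).choose (i + 1) := by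
      have h := congrArg (Nat.cast : ℕ → ℚ) e2
      push_cast [Nat.cast_sub (show i + 1 ≤ k by omega),
        Nat.cast_sub (show 1 ≤ k - i by omega),
        Nat.cast_sub (show i ≤ k by omega)] at h
      linear_combination h
    have hc : ((k - 2 * (i + 1) : ℕ) : ℚ) = (k : ℚ) - 2 * (i + 1) := by
      push_cast [Nat.cast_sub (show 2 * (i + 1) ≤ k by omega)]; ring
    push_cast [hc]
    linear_combination c2 - c1
  rw [Finset.sum_congr rfl (fun i hi => key i (Finset.mem_range.mp hi))]
  rw [Finset.sum_range_sub (fun i => (k : ℚ) * (k - 1).choose i)]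
  simp only [Nat.choose_zero_right, Nat.cast_one, mul_one, Nat.mul_zero, Nat.sub_zero,
    Nat.choose_zero_right, Nat.one_mul]
  ring

lemma b_closed (k : ℕ) (hk : 1 ≤ k) :
    (a 2 k : ℚ) = (k : ℚ) * 2 ^ (k - 1) + (k : ℚ) * (k - 1).choose ((k - 1) / 2) := by
  rw [a_two]
  have step : ∀ i ∈ Finset.range (k + 1),
      k.choose i * max i (k - i) = i * k.choose i + k.choose i * (k - 2 * i) := by
    intro i hi
    simp only [Finset.mem_range] at hi
    have : max i (k - i) = i + (k - 2 * i) := by omega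
    rw [this, Nat.mul_add, mul_comm (k.choose i) i]
  rw [Finset.sum_congr rfl step, Finset.sum_add_distrib, Nat.cast_add,
    sum_id_mul_choose, sum_trunc k hk]
  push_cast
  ring

lemma central_odd (s : ℕ) : Nat.centralBinom (s + 1) = 2 * (2 * s + 1).choose s := by
  rw [Nat.centralBinom, show 2 * (s + 1) = (2 * s + 1) + 1 by ring,
    Nat.choose_succ_succ', Nat.choose_symm_half]
  ring

lemma keyL (j : ℕ) :
    ((j : ℚ) + 4) * (j + 3).choose ((j + 3) / 2)
      = 2 * ((j : ℚ) + 4) * (j + 2).choose ((j + 2) / 2)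
        + 4 * ((j : ℚ) + 1) * (j + 1).choose ((j + 1) / 2)
        - 8 * ((j : ℚ) + 1) * j.choose (j / 2) := by
  obtain ⟨t, rfl | rfl⟩ := Nat.even_or_odd' j
  · -- j = 2t
    rw [show (2 * t + 3) / 2 = t + 1 by omega, show (2 * t + 2) / 2 = t + 1 by omega,
      show (2 * t + 1) / 2 = t by omega, show (2 * t) / 2 = t by omega]
    have hB2 : Nat.centralBinom (t + 2) = 2 * (2 * t + 3).choose (t + 1) := by
      have := central_odd (t + 1); rw [show 2 * (t + 1) + 1 = 2 * t + 3 by ring] at this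
      exact this
    have hB1 : Nat.centralBinom (t + 1) = 2 * (2 * t + 1).choose t := central_odd t
    have hc2 : (2 * t + 2).choose (t + 1) = Nat.centralBinom (t + 1) := by
      rw [Nat.centralBinom, show 2 * (t + 1) = 2 * t + 2 by ring]
    have hc0 : (2 * t).choose t = Nat.centralBinom t := by rw [Nat.centralBinom]
    have hF2 := Nat.succ_mul_centralBinom_succ t
    have hF3 := Nat.succ_mul_centralBinom_succ (t + 1)
    have q2 : ((Nat.centralBinom (t + 2) : ℕ) : ℚ) = 2 * (2 * t + 3).choose (t + 1) := by
      exact_mod_cast congrArg (Nat.cast : ℕ → ℚ) hB2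
    have q1 : ((Nat.centralBinom (t + 1) : ℕ) : ℚ) = 2 * (2 * t + 1).choose t := by
      exact_mod_cast congrArg (Nat.cast : ℕ → ℚ) hB1
    have qc2 : ((2 * t + 2).choose (t + 1) : ℚ) = Nat.centralBinom (t + 1) := by
      exact_mod_cast congrArg (Nat.cast : ℕ → ℚ) hc2
    have qc0 : ((2 * t).choose t : ℚ) = Nat.centralBinom t := by
      exact_mod_cast congrArg (Nat.cast : ℕ → ℚ) hc0
    have qF2 : ((t : ℚ) + 1) * Nat.centralBinom (t + 1)
        = 2 * (2 * t + 1) * Nat.centralBinom t := by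
      exact_mod_cast congrArg (Nat.cast : ℕ → ℚ) hF2
    have qF3 : ((t : ℚ) + 2) * Nat.centralBinom (t + 2)
        = 2 * (2 * (t + 1) + 1) * Nat.centralBinom (t + 1) := by
      exact_mod_cast congrArg (Nat.cast : ℕ → ℚ) hF3
    push_cast
    linear_combination -((t : ℚ) + 2) * q2 + (4 * (t : ℚ) + 2) * q1 - (4 * (t : ℚ) + 8) * qc2
      + (16 * (t : ℚ) + 8) * qc0 - 4 * qF2 + qF3
  · -- j = 2t + 1
    rw [show (2 * t + 1 + 3) / 2 = t + 2 by omega, show (2 * t + 1 + 2) / 2 = t + 1 by omega,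
      show (2 * t + 1 + 1) / 2 = t + 1 by omega, show (2 * t + 1) / 2 = t by omega]
    have hB2 : (2 * t + 1 + 3).choose (t + 2) = 2 * (2 * t + 3).choose (t + 1) := by
      have := central_odd (t + 1)
      rw [show 2 * (t + 1) + 1 = 2 * t + 3 by ring] at this
      rw [show 2 * t + 1 + 3 = 2 * (t + 2) by ring]
      exact this
    have hB1 : (2 * t + 1 + 1).choose (t + 1) = 2 * (2 * t + 1).choose t := by
      have := central_odd t
      rw [show 2 * t + 1 + 1 = 2 * (t + 1) by ring]
      exact this
    have q2 : ((2 * t + 1 + 3).choose (t + 2) : ℚ) = 2 * (2 * t + 3).choose (t + 1) := by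
      exact_mod_cast congrArg (Nat.cast : ℕ → ℚ) hB2
    have q1 : ((2 * t + 1 + 1).choose (t + 1) : ℚ) = 2 * (2 * t + 1).choose t := by
      exact_mod_cast congrArg (Nat.cast : ℕ → ℚ) hB1
    push_cast
    push_cast at q2 q1
    linear_combination ((t : ℚ) * 2 + 5) * q2 - (8 * (t : ℚ) + 8) * q1

theorem stmt7 (k : ℕ) (hk : 3 ≤ k) :
    (a 2 k : ℚ) = 2 * ((k : ℚ) / ((k : ℚ) - 1)) * (a 2 (k - 1) : ℚ)
      + 4 * (((k : ℚ) - 3) / ((k : ℚ) - 2)) * (a 2 (k - 2) : ℚ)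
      - 8 * (a 2 (k - 3) : ℚ) := by
  rcases Nat.lt_or_ge k 4 with h4 | h4
  · have hk3 : k = 3 := by omega
    subst hk3
    have e3 : a 2 3 = 18 := by decide
    have e2 : a 2 2 = 6 := by decide
    have e0 : a 2 0 = 0 := by decide
    norm_num [e3, e2, e0]
  · obtain ⟨j, rfl⟩ : ∃ j, k = j + 4 := ⟨k - 4, by omega⟩
    have B4 := b_closed (j + 4) (by omega)
    have B3 := b_closed (j + 3) (by omega)
    have B2 := b_closed (j + 2) (by omega)
    have B1 := b_closed (j + 1) (by omega)
    rw [show j + 4 - 1 = j + 3 by omega] at B4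
    rw [show j + 3 - 1 = j + 2 by omega] at B3
    rw [show j + 2 - 1 = j + 1 by omega] at B2
    rw [show j + 1 - 1 = j by omega] at B1
    rw [show j + 4 - 1 = j + 3 by omega, show j + 4 - 2 = j + 2 by omega,
      show j + 4 - 3 = j + 1 by omega, B4, B3, B2, B1]
    have p3 : (2 : ℚ) ^ (j + 3) = 8 * 2 ^ j := by ring
    have p2 : (2 : ℚ) ^ (j + 2) = 4 * 2 ^ j := by ring
    have p1 : (2 : ℚ) ^ (j + 1) = 2 * 2 ^ j := by ring
    rw [p3, p2, p1]
    have h2 : ((j : ℚ) + 3) ≠ 0 := by positivity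
    have h3 : ((j : ℚ) + 2) ≠ 0 := by positivity
    have hL := keyL j
    push_cast
    push_cast at hL
    set c3 : ℚ := ((j + 3).choose ((j + 3) / 2) : ℚ) with hc3
    set c2 : ℚ := ((j + 2).choose ((j + 2) / 2) : ℚ) with hc2
    set c1 : ℚ := ((j + 1).choose ((j + 1) / 2) : ℚ) with hc1
    set c0 : ℚ := (j.choose (j / 2) : ℚ) with hc0
    set p : ℚ := (2 : ℚ) ^ j with hp
    rw [show ((j : ℚ) + 4 - 1) = (j : ℚ) + 3 by ring,
      show ((j : ℚ) + 4 - 2) = (j : ℚ) + 2 by ring,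
      show ((j : ℚ) + 4 - 3) = (j : ℚ) + 1 by ring]
    field_simp
    linear_combination hL
end

section
/- For every real s with 0 ≤ s < 1/2, the series g(s) := Σ_{k=1}^∞ (a_{2,k}/k)·s^k converges and g(s) = (4s − 1 + √(1 − 4s²)) / (2 − 4s). -/
open Finset Nat

lemma tel (k t : ℕ) (ht : t ≤ k / 2) :
    ∑ i ∈ range (t + 1), (k+1).choose i * (k + 1 - 2 * i) = (k+1) * k.choose t := by
  induction t with
  | zero => simp
  | succ t ih =>
    have ht' : t ≤ k / 2 := le_of_succ_le ht
    have h2 : 2 * (t + 1) ≤ k := by omega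
    rw [Finset.sum_range_succ, ih ht']
    have e1 : (k+1) * k.choose t = (k+1).choose (t+1) * (t+1) := Nat.add_one_mul_choose_eq k t
    have e2 : k.choose (t+1) * (k + 1) = (k + 1).choose (t+1) * (k + 1 - (t+1)) :=
      Nat.choose_mul_succ_eq k (t+1)
    zify [show 2*(t+1) ≤ k+1 by omega, show t+1 ≤ k+1 by omega] at *
    linarith

lemma suma (k : ℕ) : ∑ i ∈ range (k + 2), i * (k+1).choose i = (k+1) * 2 ^ k := by
  rw [Finset.sum_range_succ']
  simp only [zero_mul, add_zero]
  calc ∑ j ∈ range (k+1), (j+1) * (k+1).choose (j+1)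
      = ∑ j ∈ range (k+1), (k+1) * k.choose j :=
        Finset.sum_congr rfl fun j _ => by rw [mul_comm (j+1), ← Nat.add_one_mul_choose_eq]
    _ = (k+1) * 2 ^ k := by rw [← Finset.mul_sum, Nat.sum_range_choose]

lemma a_two_s8 (k : ℕ) : a 2 (k + 1) = (k + 1) * (2 ^ k + k.choose (k / 2)) := by
  rw [a, Finset.Nat.antidiagonalTuple_two, Finset.sum_map]
  have hterm : ∀ p : ℕ × ℕ, p ∈ Finset.HasAntidiagonal.antidiagonal (k+1) →
      Nat.multinomial Finset.univ ((piFinTwoEquiv fun _ => ℕ).symm.toEmbedding p) *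
        Finset.univ.sup ((piFinTwoEquiv fun _ => ℕ).symm.toEmbedding p)
      = (k+1).choose p.1 * max p.1 p.2 := by
    intro p hp
    have hp' : p.1 + p.2 = k + 1 := Finset.HasAntidiagonal.mem_antidiagonal.mp hp
    have h1 : (piFinTwoEquiv fun _ => ℕ).symm.toEmbedding p = ![p.1, p.2] := by
      ext x; fin_cases x <;> rfl
    rw [h1]
    have h2 : Finset.univ.sup ![p.1, p.2] = max p.1 p.2 := by
      rw [show (univ : Finset (Fin 2)) = {0, 1} from rfl, Finset.sup_insert,
        Finset.sup_singleton]; simp [max_def]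
    have h3 : Nat.multinomial Finset.univ ![p.1, p.2] = (k+1).choose p.1 := by
      rw [show (univ : Finset (Fin 2)) = {0, 1} from rfl,
        Nat.binomial_eq_choose (by decide)]
      simp [hp']
    rw [h2, h3]
  rw [Finset.sum_congr rfl hterm,
    Finset.Nat.sum_antidiagonal_eq_sum_range_succ (fun i j => (k+1).choose i * max i j)]
  have hmax : ∀ i ∈ range (k + 2),
      (k+1).choose i * max i (k + 1 - i)
        = i * (k+1).choose i + (k+1).choose i * (k + 1 - 2 * i) := by
    intro i hi
    have hi' : i ≤ k + 1 := by simpa using Nat.lt_succ_iff.mp (Finset.mem_range.mp hi)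
    have : max i (k + 1 - i) = i + (k + 1 - 2 * i) := by omega
    rw [this, Nat.mul_add, mul_comm ((k+1).choose i) i]
  rw [show (k+1).succ = k + 2 from rfl, Finset.sum_congr rfl hmax, Finset.sum_add_distrib, suma]
  have hres : ∑ i ∈ range (k + 2), (k+1).choose i * (k + 1 - 2 * i)
      = ∑ i ∈ range (k/2 + 1), (k+1).choose i * (k + 1 - 2 * i) := by
    refine (Finset.sum_subset ?_ ?_).symm
    · exact Finset.range_subset_range.mpr (by omega)
    · intro i _ hi
      have : k + 1 - 2 * i = 0 := by
        have := Finset.mem_range.not.mp hi; omega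
      simp [this]
  rw [hres, tel k (k/2) le_rfl, Nat.mul_add]

lemma refl_sum (n : ℕ) :
    2 * ∑ i ∈ range (n + 1), i * (centralBinom i * centralBinom (n - i))
      = n * ∑ i ∈ range (n + 1), centralBinom i * centralBinom (n - i) := by
  have h := Finset.sum_range_reflect (fun i => i * (centralBinom i * centralBinom (n - i))) (n + 1)
  rw [two_mul]
  nth_rewrite 2 [← h]
  rw [← Finset.sum_add_distrib, Finset.mul_sum]
  refine Finset.sum_congr rfl fun i hi => ?_
  have hi' : i ≤ n := Nat.lt_succ_iff.mp (Finset.mem_range.mp hi)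
  have h2 : n + 1 - 1 - i = n - i := by omega
  rw [h2, show n - (n - i) = i by omega]
  rw [show centralBinom (n-i) * centralBinom i = centralBinom i * centralBinom (n-i) by ring]
  rw [← Nat.add_mul, show i + (n - i) = n by omega]

lemma conv (m : ℕ) :
    ∑ i ∈ range (m + 1), centralBinom i * centralBinom (m - i) = 4 ^ m := by
  induction m with
  | zero => simp [centralBinom]
  | succ m ih =>
    refine Nat.eq_of_mul_eq_mul_left (show 0 < m + 1 by omega) ?_
    have key : (m+1) * ∑ i ∈ range (m + 2), centralBinom i * centralBinom (m + 1 - i)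
        = 2 * ∑ i ∈ range (m + 2), i * (centralBinom i * centralBinom (m + 1 - i)) :=
      (refl_sum (m+1)).symm
    rw [key]
    have step : ∑ i ∈ range (m + 2), i * (centralBinom i * centralBinom (m + 1 - i))
        = ∑ j ∈ range (m + 1), 2 * (2 * j + 1) * centralBinom j * centralBinom (m - j) := by
      rw [Finset.sum_range_succ']
      simp only [zero_mul, add_zero]
      refine Finset.sum_congr rfl fun j hj => ?_
      have h1 : m + 1 - (j + 1) = m - j := by omega
      rw [h1, ← mul_assoc, Nat.succ_mul_centralBinom_succ j]
    rw [step]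
    have expand : ∑ j ∈ range (m + 1), 2 * (2 * j + 1) * centralBinom j * centralBinom (m - j)
        = 4 * ∑ j ∈ range (m + 1), j * (centralBinom j * centralBinom (m - j))
          + 2 * ∑ j ∈ range (m + 1), centralBinom j * centralBinom (m - j) := by
      rw [Finset.mul_sum, Finset.mul_sum, ← Finset.sum_add_distrib]
      exact Finset.sum_congr rfl fun j _ => by ring
    rw [expand, ih]
    have h2 : 2 * ∑ j ∈ range (m + 1), j * (centralBinom j * centralBinom (m - j)) = m * 4 ^ m := by
      rw [refl_sum m, ih]
    calc 2 * (4 * ∑ j ∈ range (m+1), j * (centralBinom j * centralBinom (m - j)) + 2 * 4 ^ m)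
        = 4 * (2 * ∑ j ∈ range (m+1), j * (centralBinom j * centralBinom (m - j))) + 4 * 4^m := by ring
      _ = 4 * (m * 4^m) + 4 * 4^m := by rw [h2]
      _ = (m + 1) * 4 ^ (m+1) := by ring

lemma cb_le (n : ℕ) : centralBinom n ≤ 4 ^ n := by
  have h := Nat.sum_range_choose (2 * n)
  calc centralBinom n = (2*n).choose n := rfl
    _ ≤ ∑ i ∈ range (2*n + 1), (2*n).choose i :=
        Finset.single_le_sum (fun i _ => Nat.zero_le _) (Finset.mem_range.mpr (by omega))
    _ = 4 ^ n := by rw [h, pow_mul]; norm_num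

lemma cb_summable {x : ℝ} (hx0 : 0 ≤ x) (hx : x < 1 / 4) :
    Summable (fun m : ℕ => (centralBinom m : ℝ) * x ^ m) := by
  have h4 : (0:ℝ) ≤ 4 * x := by linarith
  have h4' : 4 * x < 1 := by linarith
  refine Summable.of_nonneg_of_le (fun m => by positivity) (fun m => ?_)
    (summable_geometric_of_lt_one h4 h4')
  calc (centralBinom m : ℝ) * x ^ m ≤ (4 ^ m : ℝ) * x ^ m := by
        gcongr; exact_mod_cast cb_le m
    _ = (4 * x) ^ m := by rw [mul_pow]
  
lemma cb_hasSum {x : ℝ} (hx0 : 0 ≤ x) (hx : x < 1 / 4) :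
    HasSum (fun m : ℕ => (centralBinom m : ℝ) * x ^ m) (1 / Real.sqrt (1 - 4 * x)) := by
  have hs := cb_summable hx0 hx
  set F := ∑' m : ℕ, (centralBinom m : ℝ) * x ^ m with hF
  have hnorm : Summable (fun m : ℕ => ‖(centralBinom m : ℝ) * x ^ m‖) := by
    refine hs.congr fun m => ?_
    rw [Real.norm_eq_abs, abs_of_nonneg (by positivity)]
  have hsq : F * F = 1 / (1 - 4 * x) := by
    rw [hF, tsum_mul_tsum_eq_tsum_sum_antidiagonal_of_summable_norm hnorm hnorm]
    have : ∀ n : ℕ, ∑ p ∈ Finset.HasAntidiagonal.antidiagonal n,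
        ((centralBinom p.1 : ℝ) * x ^ p.1) * ((centralBinom p.2 : ℝ) * x ^ p.2)
        = (4 * x) ^ n := by
      intro n
      rw [Finset.Nat.sum_antidiagonal_eq_sum_range_succ
        (fun i j => ((centralBinom i : ℝ) * x ^ i) * ((centralBinom j : ℝ) * x ^ j))]
      have : ∀ i ∈ range (n+1), ((centralBinom i : ℝ) * x ^ i) * ((centralBinom (n-i) : ℝ) * x ^ (n-i))
          = (centralBinom i * centralBinom (n - i) : ℕ) * x ^ n := by
        intro i hi
        have hi' : i ≤ n := Nat.lt_succ_iff.mp (Finset.mem_range.mp hi)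
        push_cast
        rw [show (centralBinom i : ℝ) * x ^ i * ((centralBinom (n-i)) * x ^ (n-i))
          = (centralBinom i * centralBinom (n-i)) * (x ^ i * x ^ (n-i)) by ring, ← pow_add,
          Nat.add_sub_cancel' hi']
      rw [Finset.sum_congr rfl this, ← Finset.sum_mul]
      rw [show ∑ i ∈ range (n+1), ((centralBinom i * centralBinom (n - i) : ℕ) : ℝ)
        = ((∑ i ∈ range (n+1), centralBinom i * centralBinom (n - i) : ℕ) : ℝ) by push_cast; ring]
      rw [conv n]
      rw [mul_pow]; push_cast; ring
    rw [tsum_congr this, tsum_geometric_of_lt_one (by linarith) (by linarith), one_div]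
  have hFnonneg : 0 ≤ F := tsum_nonneg fun m => by positivity
  have h1x : 0 < 1 - 4 * x := by linarith
  have hFval : F = 1 / Real.sqrt (1 - 4 * x) := by
    have : F = Real.sqrt (F * F) := (Real.sqrt_mul_self hFnonneg).symm
    rw [this, hsq, one_div, one_div, Real.sqrt_inv]
  rw [← hFval]
  exact hs.hasSum

theorem stmt8 (s : ℝ) (h0 : 0 ≤ s) (h1 : s < 1 / 2) :
    Summable (fun k : ℕ => (a 2 (k + 1) : ℝ) / (k + 1) * s ^ (k + 1)) ∧
    ∑' k : ℕ, (a 2 (k + 1) : ℝ) / (k + 1) * s ^ (k + 1) =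
      (4 * s - 1 + Real.sqrt (1 - 4 * s ^ 2)) / (2 - 4 * s) := by
  have hy0 : (0:ℝ) ≤ s ^ 2 := sq_nonneg s
  have hy : s ^ 2 < 1 / 4 := by nlinarith
  set u := Real.sqrt (1 - 4 * s ^ 2) with hu_def
  have h4s : (0:ℝ) < 1 - 4 * s ^ 2 := by nlinarith
  have hu0 : 0 < u := Real.sqrt_pos.mpr h4s
  have hu2 : u ^ 2 = 1 - 4 * s ^ 2 := Real.sq_sqrt h4s.le
  have hcb : HasSum (fun m : ℕ => (centralBinom m : ℝ) * (s ^ 2) ^ m) (1 / u) := by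
    have := cb_hasSum hy0 hy
    simpa [hu_def] using this
  -- even part
  have heven : HasSum (fun m : ℕ => ((2 * m).choose ((2 * m) / 2) : ℝ) * s ^ (2 * m + 1))
      (s * (1 / u)) := by
    refine (hcb.mul_left s).congr_fun fun m => ?_
    rw [Nat.mul_div_cancel_left m (by norm_num), ← pow_mul]
    rw [show (2*m).choose m = centralBinom m from rfl]
    ring
  -- odd part
  have hodd : HasSum (fun m : ℕ => ((2 * m + 1).choose ((2 * m + 1) / 2) : ℝ) * s ^ (2 * m + 1 + 1))
      (1 / 2 * (1 / u - 1)) := by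
    have hdrop : HasSum (fun m : ℕ => (centralBinom (m + 1) : ℝ) * (s ^ 2) ^ (m + 1)) (1 / u - 1) := by
      have h2 := (hasSum_nat_add_iff' (f := fun m : ℕ => (centralBinom m : ℝ) * (s ^ 2) ^ m) 1).mpr hcb
      have h00 : ∑ i ∈ range 1, (centralBinom i : ℝ) * (s ^ 2) ^ i = 1 := by
        simp [centralBinom]
      rw [h00] at h2
      exact h2
    refine (hdrop.mul_left (1/2)).congr_fun fun m => ?_
    have hch : 2 * (2 * m + 1).choose m = centralBinom (m + 1) := by
      have h1 : centralBinom (m + 1) = (2 * m + 1).choose m + (2 * m + 1).choose (m + 1) := by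
        rw [centralBinom, show 2 * (m + 1) = (2 * m + 1) + 1 by ring, Nat.choose_succ_succ']
      have h2 : (2 * m + 1).choose (m + 1) = (2 * m + 1).choose m := by
        rw [show m + 1 = 2 * m + 1 - m by omega]
        exact Nat.choose_symm (by omega)
      omega
    rw [show (2 * m + 1) / 2 = m by omega]
    rw [← pow_mul]
    have : ((2 * m + 1).choose m : ℝ) = (centralBinom (m + 1) : ℝ) / 2 := by
      rw [← hch]; push_cast; ring
    rw [this, show 2 * (m + 1) = 2 * m + 1 + 1 by ring]
    ring
  have hmid : HasSum (fun k : ℕ => (k.choose (k / 2) : ℝ) * s ^ (k + 1))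
      (s * (1 / u) + 1 / 2 * (1 / u - 1)) := HasSum.even_add_odd heven hodd
  -- geometric part
  have hgeo : HasSum (fun k : ℕ => (2:ℝ) ^ k * s ^ (k + 1)) (s * (1 - 2 * s)⁻¹) := by
    have h2s0 : (0:ℝ) ≤ 2 * s := by linarith
    have h2s1 : 2 * s < 1 := by linarith
    refine ((hasSum_geometric_of_lt_one h2s0 h2s1).mul_left s).congr_fun fun k => ?_
    rw [mul_pow, pow_succ]
    ring
  have htotal : HasSum (fun k : ℕ => (a 2 (k + 1) : ℝ) / (k + 1) * s ^ (k + 1))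
      (s * (1 - 2 * s)⁻¹ + (s * (1 / u) + 1 / 2 * (1 / u - 1))) := by
    refine (hgeo.add hmid).congr_fun fun k => ?_
    rw [a_two_s8 k]
    have hk : ((k:ℝ) + 1) ≠ 0 := by positivity
    push_cast
    field_simp
  refine ⟨htotal.summable, ?_⟩
  rw [htotal.tsum_eq]
  have h2s : (0:ℝ) < 1 - 2 * s := by linarith
  have h2s' : (0:ℝ) < 2 - 4 * s := by linarith
  have hne1 : (1 - 2 * s) ≠ 0 := h2s.ne'
  have hne2 : (2 - 4 * s) ≠ 0 := h2s'.ne'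
  have hune : u ≠ 0 := hu0.ne'
  rw [eq_div_iff hne2, one_div]
  have ht : (1 - 2 * s) * (1 - 2 * s)⁻¹ = 1 := mul_inv_cancel₀ hne1
  have hv : u * u⁻¹ = 1 := mul_inv_cancel₀ hune
  linear_combination 2 * s * ht - u⁻¹ * hu2 + u * hv
end

section
/- For each n ≥ 1 and λ ∈ (0,∞), let f_n(λ) := E[max_{j=1,…,n} U_{j,λ}], where U_{1,λ},…,U_{n,λ} are independent Poisson random variables with mean λ. Then for each fixed n the function λ ↦ f_n(λ) is nondecreasing on (0,∞) and subadditive: f_n(λ + μ) ≤ f_n(λ) + f_n(μ) for all λ, μ ∈ (0,∞). -/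
open MeasureTheory ProbabilityTheory Real
open scoped NNReal ENNReal

/-- `f n λ = E[max_{j=1,…,n} U_{j,λ}]` where `U_{1,λ},…,U_{n,λ}` are independent Poisson
random variables with mean `λ` (expectation over the product of `n` Poisson(λ) laws). -/
noncomputable def poissonMaxExpectation (n : ℕ) (lam : ℝ≥0) : ℝ :=
  ∫ u : Fin n → ℕ, ((Finset.univ.sup u : ℕ) : ℝ)
    ∂(Measure.pi fun _ : Fin n => poissonMeasure lam)

private lemma poissonMeasure_singleton (r : ℝ≥0) (m : ℕ) :
    poissonMeasure r {m} = ENNReal.ofReal (poissonPMFReal r m) := by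
  rw [ProbabilityTheory.poissonMeasure_singleton]; rfl

private lemma poisson_conv_real (a b : ℝ≥0) (k : ℕ) :
    ∑ i ∈ Finset.range (k + 1), poissonPMFReal a i * poissonPMFReal b (k - i)
      = poissonPMFReal (a + b) k := by
  unfold poissonPMFReal
  rw [NNReal.coe_add, neg_add, Real.exp_add, add_pow, Finset.mul_sum, Finset.sum_div]
  refine Finset.sum_congr rfl fun i hi => ?_
  have hik : i ≤ k := Nat.lt_succ_iff.mp (Finset.mem_range.mp hi)
  have hc : ((k.choose i : ℕ) : ℝ) = k.factorial / (i.factorial * (k - i).factorial) :=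
    Nat.cast_choose ℝ hik
  have h1 : ((i.factorial : ℕ) : ℝ) ≠ 0 := Nat.cast_ne_zero.mpr i.factorial_ne_zero
  have h2 : (((k - i).factorial : ℕ) : ℝ) ≠ 0 := Nat.cast_ne_zero.mpr (k - i).factorial_ne_zero
  have h3 : ((k.factorial : ℕ) : ℝ) ≠ 0 := Nat.cast_ne_zero.mpr k.factorial_ne_zero
  rw [hc]
  field_simp

private lemma poisson_conv (a b : ℝ≥0) :
    MeasurePreserving (fun p : ℕ × ℕ => p.1 + p.2)
      ((poissonMeasure a).prod (poissonMeasure b)) (poissonMeasure (a + b)) := by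
  refine ⟨measurable_of_countable _, ?_⟩
  apply Measure.ext_of_singleton
  intro k
  rw [Measure.map_apply (measurable_of_countable _) (measurableSet_singleton k)]
  have hset : (fun p : ℕ × ℕ => p.1 + p.2) ⁻¹' {k}
      = ⋃ i ∈ Finset.range (k + 1), {((i, k - i) : ℕ × ℕ)} := by
    ext ⟨x, y⟩
    simp only [Set.mem_preimage, Set.mem_singleton_iff, Set.mem_iUnion, Finset.mem_range,
      Prod.mk.injEq]
    constructor
    · intro h; exact ⟨x, by omega, rfl, by omega⟩
    · rintro ⟨i, hi, rfl, rfl⟩; omega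
  have hdisj : (↑(Finset.range (k + 1)) : Set ℕ).PairwiseDisjoint
      fun i => ({((i, k - i) : ℕ × ℕ)} : Set (ℕ × ℕ)) := by
    intro i _ j _ hij
    simp only [Function.onFun, Set.disjoint_singleton, ne_eq, Prod.mk.injEq, not_and]
    exact fun h _ => hij h
  rw [hset, measure_biUnion_finset hdisj (fun i _ => measurableSet_singleton _)]
  have hterm : ∀ i, ((poissonMeasure a).prod (poissonMeasure b)) {((i, k - i) : ℕ × ℕ)}
      = ENNReal.ofReal (poissonPMFReal a i * poissonPMFReal b (k - i)) := by
    intro i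
    rw [← Set.singleton_prod_singleton, Measure.prod_prod, _root_.poissonMeasure_singleton,
      _root_.poissonMeasure_singleton, ← ENNReal.ofReal_mul poissonPMFReal_nonneg]
  simp_rw [hterm]
  rw [← ENNReal.ofReal_sum_of_nonneg
    (fun i _ => mul_nonneg poissonPMFReal_nonneg poissonPMFReal_nonneg),
    poisson_conv_real, _root_.poissonMeasure_singleton]

private lemma measurePreserving_eval_const {n : ℕ} (μ : Measure ℕ) [IsProbabilityMeasure μ]
    (j : Fin n) :
    MeasurePreserving (fun u : Fin n → ℕ => u j) (Measure.pi fun _ : Fin n => μ) μ := by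
  refine ⟨measurable_pi_apply j, ?_⟩
  ext s hs
  rw [Measure.map_apply (measurable_pi_apply j) hs,
    show (fun u : Fin n → ℕ => u j) ⁻¹' s = Function.eval j ⁻¹' s from rfl,
    Set.eval_preimage, Measure.pi_pi]
  rw [Finset.prod_eq_single j (fun i _ hij => by
      rw [Function.update_of_ne hij]; exact measure_univ)
    (fun h => absurd (Finset.mem_univ j) h)]
  rw [Function.update_self]

private lemma poisson_moment_lt_top (r : ℝ≥0) :
    ∫⁻ (k : ℕ), (k : ℝ≥0∞) ∂poissonMeasure r < ⊤ := by
  rw [lintegral_countable']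
  have hle : ∀ k : ℕ, (k : ℝ≥0∞) * poissonMeasure r {k}
      ≤ ENNReal.ofReal (Real.exp (-(r : ℝ)) * ((2 * (r : ℝ)) ^ k / k.factorial)) := by
    intro k
    rw [_root_.poissonMeasure_singleton, ← ENNReal.ofReal_natCast,
      ← ENNReal.ofReal_mul (Nat.cast_nonneg k)]
    apply ENNReal.ofReal_le_ofReal
    unfold poissonPMFReal
    have hk : (k : ℝ) ≤ 2 ^ k := by exact_mod_cast (Nat.lt_two_pow_self (n := k)).le
    calc (k : ℝ) * (Real.exp (-(r : ℝ)) * (r : ℝ) ^ k / k.factorial)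
        ≤ 2 ^ k * (Real.exp (-(r : ℝ)) * (r : ℝ) ^ k / k.factorial) :=
          mul_le_mul_of_nonneg_right hk (by positivity)
      _ = Real.exp (-(r : ℝ)) * ((2 * (r : ℝ)) ^ k / k.factorial) := by
          rw [mul_pow]; ring
  have hsum : Summable fun k : ℕ =>
      Real.exp (-(r : ℝ)) * ((2 * (r : ℝ)) ^ k / k.factorial) :=
    (Real.summable_pow_div_factorial (2 * (r : ℝ))).mul_left _
  calc ∑' k : ℕ, (k : ℝ≥0∞) * poissonMeasure r {k}
      ≤ ∑' k : ℕ, ENNReal.ofReal (Real.exp (-(r : ℝ)) * ((2 * (r : ℝ)) ^ k / k.factorial)) :=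
        ENNReal.tsum_le_tsum hle
    _ = ENNReal.ofReal (∑' k : ℕ, Real.exp (-(r : ℝ)) * ((2 * (r : ℝ)) ^ k / k.factorial)) :=
        (ENNReal.ofReal_tsum_of_nonneg (fun k => by positivity) hsum).symm
    _ < ⊤ := ENNReal.ofReal_lt_top

private lemma integrable_poissonMax (n : ℕ) (r : ℝ≥0) :
    Integrable (fun u : Fin n → ℕ => ((Finset.univ.sup u : ℕ) : ℝ))
      (Measure.pi fun _ : Fin n => poissonMeasure r) := by
  refine ⟨(measurable_of_countable _).aestronglyMeasurable, ?_⟩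
  have key : ∀ u : Fin n → ℕ, (‖((Finset.univ.sup u : ℕ) : ℝ)‖₊ : ℝ≥0∞)
      ≤ ∑ j : Fin n, (u j : ℝ≥0∞) := by
    intro u
    have h1 : (Finset.univ.sup u) ≤ ∑ j : Fin n, u j :=
      Finset.sup_le fun j hj => Finset.single_le_sum (fun _ _ => Nat.zero_le _) hj
    calc (‖((Finset.univ.sup u : ℕ) : ℝ)‖₊ : ℝ≥0∞)
        = ((Finset.univ.sup u : ℕ) : ℝ≥0∞) := by
          rw [← ENNReal.ofReal_natCast, ← Real.enorm_eq_ofReal (Nat.cast_nonneg _)]; rfl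
      _ ≤ ((∑ j : Fin n, u j : ℕ) : ℝ≥0∞) := Nat.cast_le.mpr h1
      _ = ∑ j : Fin n, (u j : ℝ≥0∞) := Nat.cast_sum _ _
  refine lt_of_le_of_lt (lintegral_mono key) ?_
  rw [lintegral_finset_sum _ (fun j _ => measurable_of_countable _)]
  have heach : ∀ j : Fin n, ∫⁻ u : Fin n → ℕ, (u j : ℝ≥0∞)
      ∂(Measure.pi fun _ : Fin n => poissonMeasure r)
      = ∫⁻ k : ℕ, (k : ℝ≥0∞) ∂poissonMeasure r := fun j =>
    (measurePreserving_eval_const (poissonMeasure r) j).lintegral_comp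
      (measurable_of_countable _)
  simp_rw [heach]
  exact ENNReal.sum_lt_top.mpr fun j _ => poisson_moment_lt_top r

private lemma integral_comp_mp {α : Type*} [MeasurableSpace α]
    {β : Type*} [MeasurableSpace β] {μ : Measure α} {ν : Measure β} {g : α → β}
    (hg : MeasurePreserving g μ ν) (f : β → ℝ) (hf : AEStronglyMeasurable f ν) :
    ∫ x, f (g x) ∂μ = ∫ y, f y ∂ν := by
  rw [← hg.map_eq] at hf ⊢
  exact (integral_map hg.measurable.aemeasurable hf).symm

private lemma key_ineqs (n : ℕ) (a b : ℝ≥0) :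
    poissonMaxExpectation n a ≤ poissonMaxExpectation n (a + b) ∧
    poissonMaxExpectation n (a + b) ≤ poissonMaxExpectation n a + poissonMaxExpectation n b := by
  set Pa := poissonMeasure a
  set Pb := poissonMeasure b
  set Q : Measure (Fin n → ℕ × ℕ) := Measure.pi fun _ : Fin n => Pa.prod Pb with hQ
  have hfst : MeasurePreserving Prod.fst (Pa.prod Pb) Pa :=
    ⟨measurable_fst, by simp [Measure.map_fst_prod]⟩
  have hsnd : MeasurePreserving Prod.snd (Pa.prod Pb) Pb :=
    ⟨measurable_snd, by simp [Measure.map_snd_prod]⟩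
  have hS : MeasurePreserving (fun (w : Fin n → ℕ × ℕ) (i : Fin n) => (w i).1 + (w i).2)
      Q (Measure.pi fun _ : Fin n => poissonMeasure (a + b)) :=
    MeasureTheory.measurePreserving_pi _ _ (fun _ => poisson_conv a b)
  have hF1 : MeasurePreserving (fun (w : Fin n → ℕ × ℕ) (i : Fin n) => (w i).1)
      Q (Measure.pi fun _ : Fin n => Pa) :=
    MeasureTheory.measurePreserving_pi _ _ (fun _ => hfst)
  have hF2 : MeasurePreserving (fun (w : Fin n → ℕ × ℕ) (i : Fin n) => (w i).2)
      Q (Measure.pi fun _ : Fin n => Pb) :=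
    MeasureTheory.measurePreserving_pi _ _ (fun _ => hsnd)
  have hMm : ∀ r : ℝ≥0, AEStronglyMeasurable
      (fun u : Fin n → ℕ => ((Finset.univ.sup u : ℕ) : ℝ))
      (Measure.pi fun _ : Fin n => poissonMeasure r) :=
    fun r => (measurable_of_countable _).aestronglyMeasurable
  have eS : poissonMaxExpectation n (a + b)
      = ∫ w : Fin n → ℕ × ℕ,
          ((Finset.univ.sup (fun i => (w i).1 + (w i).2) : ℕ) : ℝ) ∂Q :=
    (integral_comp_mp hS _ (hMm (a + b))).symm
  have eA : poissonMaxExpectation n a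
      = ∫ w : Fin n → ℕ × ℕ, ((Finset.univ.sup (fun i => (w i).1) : ℕ) : ℝ) ∂Q :=
    (integral_comp_mp hF1 _ (hMm a)).symm
  have eB : poissonMaxExpectation n b
      = ∫ w : Fin n → ℕ × ℕ, ((Finset.univ.sup (fun i => (w i).2) : ℕ) : ℝ) ∂Q :=
    (integral_comp_mp hF2 _ (hMm b)).symm
  have iS : Integrable (fun w : Fin n → ℕ × ℕ =>
      ((Finset.univ.sup (fun i => (w i).1 + (w i).2) : ℕ) : ℝ)) Q :=
    (hS.integrable_comp (hMm (a + b))).mpr (integrable_poissonMax n (a + b))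
  have iA : Integrable (fun w : Fin n → ℕ × ℕ =>
      ((Finset.univ.sup (fun i => (w i).1) : ℕ) : ℝ)) Q :=
    (hF1.integrable_comp (hMm a)).mpr (integrable_poissonMax n a)
  have iB : Integrable (fun w : Fin n → ℕ × ℕ =>
      ((Finset.univ.sup (fun i => (w i).2) : ℕ) : ℝ)) Q :=
    (hF2.integrable_comp (hMm b)).mpr (integrable_poissonMax n b)
  constructor
  · rw [eA, eS]
    refine integral_mono iA iS fun w => ?_
    have h : Finset.univ.sup (fun i => (w i).1)
        ≤ Finset.univ.sup (fun i => (w i).1 + (w i).2) :=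
      Finset.sup_mono_fun fun i _ => Nat.le_add_right _ _
    exact Nat.cast_le.mpr h
  · rw [eA, eB, eS, ← integral_add iA iB]
    refine integral_mono iS (iA.add iB) fun w => ?_
    have : Finset.univ.sup (fun i => (w i).1 + (w i).2)
        ≤ Finset.univ.sup (fun i => (w i).1) + Finset.univ.sup (fun i => (w i).2) :=
      Finset.sup_le fun j hj =>
        add_le_add (Finset.le_sup (f := fun i => (w i).1) hj)
          (Finset.le_sup (f := fun i => (w i).2) hj)
    exact_mod_cast Nat.cast_le.mpr this

theorem stmt10 (n : ℕ) (hn : 1 ≤ n) :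
    (∀ lam mu : ℝ≥0, 0 < lam → lam ≤ mu →
      poissonMaxExpectation n lam ≤ poissonMaxExpectation n mu) ∧
    (∀ lam mu : ℝ≥0, 0 < lam → 0 < mu →
      poissonMaxExpectation n (lam + mu) ≤
        poissonMaxExpectation n lam + poissonMaxExpectation n mu) := by
  constructor
  · intro lam mu _ hle
    have h := (key_ineqs n lam (mu - lam)).1
    rwa [add_tsub_cancel_of_le hle] at h
  · intro lam mu _ _
    exact (key_ineqs n lam mu).2
end

section
/- Fix a finite connected simple graph G=(V,E). For every h ∈ S there exists n ∈ ℕ such that for every initial configuration h̃ ∈ S, the ballistic deposition process started from H_0 = h̃ satisfies P[δ_n = h] ≥ (#V)^{−n}, where δ_n is the surface configuration after n steps. (Lemma 1, Doeblin-type minorization for the surface chain.) -/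
open MeasureTheory Filter Topology
open scoped ENNReal Classical

/-- The ballistic deposition height process on a graph `G`, started from `h0`,
driven by the sequence of chosen vertices `X`. -/
noncomputable def heightProcess {V : Type*} [Fintype V] (G : SimpleGraph V)
    (h0 : V → ℕ) (X : ℕ → V) : ℕ → V → ℕ
  | 0 => h0
  | n + 1 => fun x =>
      if x = X n then
        1 + Finset.univ.sup (fun y =>
          if y = x ∨ G.Adj x y then heightProcess G h0 X n y else 0)
      else heightProcess G h0 X n x

/-- `X` is an i.i.d. sequence of uniformly distributed `V`-valued random variables on `(Ω, μ)`:
every finite cylinder event has the product-of-uniform probabilities. -/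
def IsUniformIID {V : Type*} [Fintype V] {Ω : Type*} [MeasurableSpace Ω]
    (μ : Measure Ω) (X : ℕ → Ω → V) : Prop :=
  (∀ (n : ℕ) (v : V), MeasurableSet {ω | X n ω = v}) ∧
  (∀ (n : ℕ) (f : ℕ → V), μ {ω | ∀ k < n, X k ω = f k} = (Fintype.card V : ℝ≥0∞)⁻¹ ^ n)

/-- `γ` is the growth rate of `G`: `γ > 0` and, for any i.i.d. uniform driving sequence,
almost surely `(#V/n) · max_x H_{x,n} → γ` and `(#V/n) · min_x H_{x,n} → γ`. -/
def IsGrowthRate {V : Type*} [Fintype V] (G : SimpleGraph V) (γ : ℝ) : Prop :=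
  0 < γ ∧
  ∀ {Ω : Type} [MeasurableSpace Ω] (μ : Measure Ω) [IsProbabilityMeasure μ]
    (X : ℕ → Ω → V), IsUniformIID μ X →
    (∀ᵐ ω ∂μ, Tendsto (fun n : ℕ =>
        (Fintype.card V : ℝ) *
          (⨆ x : V, (heightProcess G (fun _ => 0) (fun k => X k ω) n x : ℝ)) / n)
      atTop (𝓝 γ)) ∧
    (∀ᵐ ω ∂μ, Tendsto (fun n : ℕ =>
        (Fintype.card V : ℝ) *
          (⨅ x : V, (heightProcess G (fun _ => 0) (fun k => X k ω) n x : ℝ)) / n)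
      atTop (𝓝 γ))


/-- The state space of the surface chain: height profiles attaining `0` somewhere and with
distinct values across every edge. -/
def surfaceStates {V : Type*} (G : SimpleGraph V) : Set (V → ℕ) :=
  {h | (∃ x, h x = 0) ∧ ∀ x y, G.Adj x y → h x ≠ h y}

section BD
variable {V : Type} [Fintype V] (G : SimpleGraph V)

noncomputable def nbrSup (c : V → ℕ) (v : V) : ℕ :=
  Finset.univ.sup (fun y => if y = v ∨ G.Adj v y then c y else 0)

noncomputable def bdStep (c : V → ℕ) (v : V) : V → ℕ :=
  fun x => if x = v then 1 + nbrSup G c v else c x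

noncomputable def run (c : V → ℕ) : List V → (V → ℕ)
  | [] => c
  | v :: A => run (bdStep G c v) A

@[simp] lemma run_nil (c : V → ℕ) : run G c [] = c := rfl
@[simp] lemma run_cons (c : V → ℕ) (v : V) (A : List V) :
    run G c (v :: A) = run G (bdStep G c v) A := rfl

lemma le_nbrSup {c : V → ℕ} {v y : V} (hy : y = v ∨ G.Adj v y) : c y ≤ nbrSup G c v := by
  have := Finset.le_sup (f := fun y => if y = v ∨ G.Adj v y then c y else 0)
    (Finset.mem_univ y)
  simpa [nbrSup, if_pos hy] using this

lemma self_le_nbrSup (c : V → ℕ) (v : V) : c v ≤ nbrSup G c v :=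
  le_nbrSup G (Or.inl rfl)

lemma nbrSup_le {c : V → ℕ} {v : V} {M : ℕ} (hM : ∀ y, (y = v ∨ G.Adj v y) → c y ≤ M) :
    nbrSup G c v ≤ M := by
  apply Finset.sup_le
  intro y _
  split_ifs with hy
  · exact hM y hy
  · exact Nat.zero_le M

lemma le_bdStep (c : V → ℕ) (v x : V) : c x ≤ bdStep G c v x := by
  unfold bdStep
  split_ifs with hx
  · subst hx
    have := self_le_nbrSup G c x
    omega
  · exact le_refl _

lemma le_run (c : V → ℕ) (A : List V) (x : V) : c x ≤ run G c A x := by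
  induction A generalizing c with
  | nil => exact le_refl _
  | cons a A ih => exact le_trans (le_bdStep G c a x) (ih _)

lemma run_append (c : V → ℕ) (A B : List V) :
    run G c (A ++ B) = run G (run G c A) B := by
  induction A generalizing c with
  | nil => rfl
  | cons a A ih => simp [run, ih]

lemma run_upper {c : V → ℕ} {M : ℕ} (hM : ∀ x, c x ≤ M) (A : List V) :
    ∀ x, run G c A x ≤ M + A.length := by
  induction A generalizing c M with
  | nil => simpa using hM
  | cons a A ih =>
    intro x
    have hstep : ∀ x, bdStep G c a x ≤ M + 1 := by
      intro x
      unfold bdStep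
      split_ifs
      · have : nbrSup G c a ≤ M := nbrSup_le G (fun y _ => hM y)
        omega
      · exact le_trans (hM x) (Nat.le_succ M)
    have := ih hstep x
    simp only [run_cons, List.length_cons]
    omega

/-- Propagation: dropping along a chain starting adjacent to a vertex of value ≥ M
makes every visited vertex have value ≥ M + 1. -/
lemma run_prop (A : List V) : ∀ (a : V) (c : V → ℕ) (M : ℕ),
    List.Chain G.Adj a A → M ≤ c a → ∀ v ∈ A, M + 1 ≤ run G c A v := by
  induction A with
  | nil => simp
  | cons b A ih =>
    intro a c M hchain hca v hv
    obtain ⟨hab, hchain'⟩ := List.chain_cons.mp hchain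
    have hb : M + 1 ≤ bdStep G c b b := by
      have h1 : c a ≤ nbrSup G c b := le_nbrSup G (Or.inr hab.symm)
      have h2 : bdStep G c b b = 1 + nbrSup G c b := by simp [bdStep]
      omega
    rcases List.mem_cons.mp hv with rfl | hv'
    · exact le_trans hb (le_run G _ A v)
    · exact ih b (bdStep G c b) M hchain' (by omega) v hv'

lemma bdStep_eq_update (c : V → ℕ) (v : V) :
    bdStep G c v = Function.update c v (1 + nbrSup G c v) := by
  funext x
  unfold bdStep
  by_cases hx : x = v
  · subst hx; simp
  · simp [Function.update_of_ne hx, hx]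

lemma nbrSup_update_self {c : V → ℕ} {v : V} {T : ℕ} (hT : nbrSup G c v ≤ T) :
    nbrSup G (Function.update c v T) v = T := by
  apply le_antisymm
  · apply nbrSup_le
    intro y hy
    rcases eq_or_ne y v with rfl | hne
    · simp
    · rw [Function.update_of_ne hne]
      exact le_trans (le_nbrSup G hy) hT
  · have := self_le_nbrSup G (Function.update c v T) v
    simpa using this

lemma run_replicate (c : V → ℕ) (v : V) :
    ∀ k, 1 ≤ k → run G c (List.replicate k v) = Function.update c v (nbrSup G c v + k) := by
  intro k
  induction k generalizing c with
  | zero => omega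
  | succ k ih =>
    intro _
    rcases Nat.eq_zero_or_pos k with rfl | hk
    · simp [List.replicate, run, bdStep_eq_update, Nat.add_comm]
    · have : List.replicate (k+1) v = v :: List.replicate k v := rfl
      rw [this, run_cons, ih _ hk, bdStep_eq_update]
      have hS : nbrSup G (Function.update c v (1 + nbrSup G c v)) v = 1 + nbrSup G c v :=
        nbrSup_update_self G (by omega)
      rw [hS, Function.update_idem]
      have : 1 + nbrSup G c v + k = nbrSup G c v + (k+1) := by omega
      rw [this]

noncomputable def waveCfg : (V → ℕ) → ℕ → List V → (V → ℕ)
  | c, _, [] => c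
  | c, t, b :: A => waveCfg (Function.update c b t) (t+1) A

@[simp] lemma waveCfg_nil (c : V → ℕ) (t : ℕ) : waveCfg c t [] = c := rfl
@[simp] lemma waveCfg_cons (c : V → ℕ) (t : ℕ) (b : V) (A : List V) :
    waveCfg c t (b :: A) = waveCfg (Function.update c b t) (t+1) A := rfl

lemma run_eq_waveCfg (A : List V) : ∀ (a : V) (c : V → ℕ) (C : ℕ),
    List.Chain G.Adj a A → c a = C → (∀ v, c v ≤ C) →
    run G c A = waveCfg c (C+1) A := by
  induction A with
  | nil => intro a c C _ _ _; rfl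
  | cons b A ih =>
    intro a c C hchain hca hall
    obtain ⟨hab, hchain'⟩ := List.chain_cons.mp hchain
    have hSb : nbrSup G c b = C := by
      apply le_antisymm (nbrSup_le G (fun y _ => hall y))
      exact hca ▸ le_nbrSup G (Or.inr hab.symm)
    rw [run_cons, bdStep_eq_update, hSb, waveCfg_cons]
    have h1 : Function.update c b (1 + C) b = C + 1 := by simp [Nat.add_comm]
    have h2 : ∀ v, Function.update c b (1 + C) v ≤ C + 1 := by
      intro v
      rcases eq_or_ne v b with rfl | hne
      · simp [Nat.add_comm]
      · rw [Function.update_of_ne hne]; exact le_trans (hall v) (Nat.le_succ C)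
    have := ih b (Function.update c b (1 + C)) (C+1) hchain' h1 h2
    rw [show (1 + C) = C + 1 by omega] at this ⊢
    exact this

lemma waveCfg_congr : ∀ (A : List V) (c c' : V → ℕ) (t : ℕ),
    (∀ v, v ∉ A → c v = c' v) → waveCfg c t A = waveCfg c' t A := by
  intro A
  induction A with
  | nil => intro c c' t hc; funext v; exact hc v (by simp)
  | cons b A ih =>
    intro c c' t hc
    simp only [waveCfg_cons]
    apply ih
    intro v hv
    rcases eq_or_ne v b with rfl | hne
    · simp
    · rw [Function.update_of_ne hne, Function.update_of_ne hne]
      exact hc v (by simp [hv, hne])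

lemma waveCfg_add : ∀ (A : List V) (c : V → ℕ) (t s : ℕ),
    waveCfg (fun x => c x + s) (t + s) A = fun x => waveCfg c t A x + s := by
  intro A
  induction A with
  | nil => intro c t s; rfl
  | cons b A ih =>
    intro c t s
    simp only [waveCfg_cons]
    have : Function.update (fun x => c x + s) b (t + s) =
        fun x => Function.update c b t x + s := by
      funext x
      rcases eq_or_ne x b with rfl | hne
      · simp
      · simp [Function.update_of_ne hne]
    rw [this, show t + s + 1 = (t + 1) + s by omega, ih]

lemma nbrSup_add (c : V → ℕ) (s : ℕ) (v : V) :
    nbrSup G (fun x => c x + s) v = nbrSup G c v + s := by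
  apply le_antisymm
  · apply nbrSup_le
    intro y hy
    have := le_nbrSup G (c := c) hy
    omega
  · obtain ⟨y, _, hy⟩ := Finset.exists_mem_eq_sup Finset.univ
      ⟨v, Finset.mem_univ v⟩ (fun y => if y = v ∨ G.Adj v y then c y else 0)
    by_cases hcond : y = v ∨ G.Adj v y
    · have h1 : nbrSup G c v = c y := by rw [nbrSup, hy, if_pos hcond]
      have h2 : c y + s ≤ nbrSup G (fun x => c x + s) v := by simpa using le_nbrSup G (c := fun x => c x + s) hcond
      omega
    · have h1 : nbrSup G c v = 0 := by rw [nbrSup, hy, if_neg hcond]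
      have h2 : c v + s ≤ nbrSup G (fun x => c x + s) v := by simpa using self_le_nbrSup G (fun x => c x + s) v
      omega

lemma run_add (A : List V) : ∀ (c : V → ℕ) (s : ℕ),
    run G (fun x => c x + s) A = fun x => run G c A x + s := by
  induction A with
  | nil => intro c s; rfl
  | cons a A ih =>
    intro c s
    have : bdStep G (fun x => c x + s) a = fun x => bdStep G c a x + s := by
      funext x
      simp only [bdStep, nbrSup_add]
      split_ifs <;> omega
    rw [run_cons, this, ih]
    rfl

lemma buildAux (h : V → ℕ) (hadj : ∀ x y, G.Adj x y → h x ≠ h y) (A' B : ℕ) (hBA : B < A') :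
    ∀ (l : List V) (c : V → ℕ), l.Nodup →
    List.Pairwise (fun a b => h a ≤ h b) l →
    (∀ v ∈ l, c v ≤ B) → (∀ v, v ∉ l → c v = A' + h v) →
    (∀ u ∈ l, ∀ v, v ∉ l → G.Adj u v → h v < h u) →
    ∃ w : List V, run G c w = fun v => A' + h v := by
  intro l
  induction l with
  | nil =>
    intro c _ _ _ h2 _
    exact ⟨[], by funext v; simpa using h2 v (by simp)⟩
  | cons u l ih =>
    intro c hnd hsort h1 h2 h3
    have hSu : nbrSup G c u ≤ A' + h u - 1 := by
      apply nbrSup_le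
      intro y hy
      by_cases hyl : y ∈ u :: l
      · have := h1 y hyl
        omega
      · have hadj' : G.Adj u y := by
          rcases hy with h' | h'
          · exact absurd (by rw [h']; exact List.mem_cons_self) hyl
          · exact h'
        have hlt := h3 u (List.mem_cons_self) y hyl hadj'
        have := h2 y hyl
        omega
    have hk1 : 1 ≤ A' + h u - nbrSup G c u := by omega
    have hrep : run G c (List.replicate (A' + h u - nbrSup G c u) u)
        = Function.update c u (A' + h u) := by
      rw [run_replicate G c u _ hk1]
      have heq : nbrSup G c u + (A' + h u - nbrSup G c u) = A' + h u := by omega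
      rw [heq]
    have hul : u ∉ l := (List.nodup_cons.mp hnd).1
    obtain ⟨w', hw'⟩ := ih (Function.update c u (A' + h u)) (List.nodup_cons.mp hnd).2
      (List.pairwise_cons.mp hsort).2
      (by
        intro v hv
        rw [Function.update_of_ne (by rintro rfl; exact hul hv)]
        exact h1 v (List.mem_cons_of_mem u hv))
      (by
        intro v hv
        rcases eq_or_ne v u with rfl | hne
        · simp
        · rw [Function.update_of_ne hne]
          exact h2 v (by simp [hv, hne]))
      (by
        intro a ha v hv hadj'
        rcases eq_or_ne v u with rfl | hne
        · have hle := (List.pairwise_cons.mp hsort).1 a ha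
          have hne' := hadj a v hadj'
          omega
        · exact h3 a (List.mem_cons_of_mem u ha) v (by simp [hv, hne]) hadj')
    exact ⟨List.replicate (A' + h u - nbrSup G c u) u ++ w', by
      rw [run_append, hrep]; exact hw'⟩

lemma exists_tour [Nontrivial V] (hG : G.Connected) :
    ∃ (x0 : V) (R : List V), List.Chain G.Adj x0 R ∧
      R.getLast?.or (some x0) = some x0 ∧ R ≠ [] ∧ ∀ v : V, v ∈ R := by
  classical
  obtain ⟨x0, y0, hxy⟩ := exists_pair_ne V
  -- a closed walk through `v`
  have hseg : ∀ v : V, ∃ s : List V, List.Chain G.Adj x0 s ∧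
      s.getLast?.or (some x0) = some x0 ∧ v ∈ x0 :: s := by
    intro v
    obtain ⟨q⟩ := hG.preconnected x0 v
    refine ⟨(q.append q.reverse).support.tail, ?_, ?_, ?_⟩
    · have h1 : List.Chain' G.Adj (x0 :: (q.append q.reverse).support.tail) := by
        rw [← SimpleGraph.Walk.support_eq_cons]
        exact (q.append q.reverse).isChain_adj_support
      exact h1
    · have h2 : (x0 :: (q.append q.reverse).support.tail).getLast? = some x0 := by
        rw [← SimpleGraph.Walk.support_eq_cons, ← List.head?_reverse,
          ← SimpleGraph.Walk.support_reverse]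
        rw [SimpleGraph.Walk.support_eq_cons]
        rfl
      rw [show (x0 :: (q.append q.reverse).support.tail) =
        [x0] ++ (q.append q.reverse).support.tail by rfl] at h2
      rw [List.getLast?_append] at h2
      simpa using h2
    · rw [← SimpleGraph.Walk.support_eq_cons, SimpleGraph.Walk.support_append]
      exact List.mem_append.mpr (Or.inl q.end_mem_support)
  choose seg hseg1 hseg2 hseg3 using hseg
  -- concatenation preserves the invariant
  have happ : ∀ (l1 l2 : List V),
      List.Chain G.Adj x0 l1 → l1.getLast?.or (some x0) = some x0 →
      List.Chain G.Adj x0 l2 → l2.getLast?.or (some x0) = some x0 →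
      List.Chain G.Adj x0 (l1 ++ l2) ∧ (l1 ++ l2).getLast?.or (some x0) = some x0 := by
    intro l1 l2 hc1 hl1 hc2 hl2
    constructor
    · have hch : List.Chain' G.Adj ((x0 :: l1) ++ l2) := by
        apply List.IsChain.append (show List.Chain' G.Adj (x0 :: l1) from hc1)
          ((show List.Chain' G.Adj (x0 :: l2) from hc2).tail)
        intro x hx y hy
        have hx0 : x = x0 := by
          have : (x0 :: l1).getLast? = some x0 := by
            rw [show (x0 :: l1) = [x0] ++ l1 by rfl, List.getLast?_append]
            simpa using hl1
          rw [this] at hx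
          exact (by simpa using hx : x0 = x).symm
        subst hx0
        cases l2 with
        | nil => simp at hy
        | cons b l2' =>
          simp only [List.tail_cons, List.head?_cons, Option.mem_def, Option.some.injEq] at hy
          subst hy
          exact (List.chain_cons.mp hc2).1
      exact hch
    · rw [List.getLast?_append, Option.or_assoc, hl1, hl2]
  -- fold all segments together
  have hfold : ∀ l : List V,
      List.Chain G.Adj x0 (l.foldr (fun v acc => seg v ++ acc) []) ∧
      (l.foldr (fun v acc => seg v ++ acc) []).getLast?.or (some x0) = some x0 := by
    intro l
    induction l with
    | nil => exact ⟨List.Chain.nil, by simp⟩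
    | cons a l ihl => exact happ _ _ (hseg1 a) (hseg2 a) ihl.1 ihl.2
  have hsub : ∀ (l : List V) (v : V), v ∈ l →
      ∀ x ∈ seg v, x ∈ l.foldr (fun v acc => seg v ++ acc) [] := by
    intro l
    induction l with
    | nil => simp
    | cons a l ihl =>
      intro v hv x hx
      rcases List.mem_cons.mp hv with rfl | hv'
      · exact List.mem_append.mpr (Or.inl hx)
      · exact List.mem_append.mpr (Or.inr (ihl v hv' x hx))
  refine ⟨x0, Finset.univ.toList.foldr (fun v acc => seg v ++ acc) [],
    (hfold _).1, (hfold _).2, ?_, ?_⟩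
  · -- nonempty: y0's segment is nonempty and inside
    intro hnil
    have hy0 : y0 ∈ seg y0 := by
      rcases List.mem_cons.mp (hseg3 y0) with h' | h'
      · exact absurd h' hxy.symm
      · exact h'
    have := hsub Finset.univ.toList y0 (Finset.mem_toList.mpr (Finset.mem_univ y0)) y0 hy0
    rw [hnil] at this
    simp at this
  · intro v
    rcases eq_or_ne v x0 with rfl | hne
    · -- x0 is the last element of seg y0
      have hy0 : y0 ∈ seg y0 := by
        rcases List.mem_cons.mp (hseg3 y0) with h' | h'
        · exact absurd h' hxy.symm
        · exact h'
      have hne' : seg y0 ≠ [] := fun hs => by simp [hs] at hy0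
      have hx0 : v ∈ seg y0 := by
        have h2 := hseg2 y0
        rw [List.getLast?_eq_getLast hne'] at h2
        have : (seg y0).getLast hne' = v := by simpa using h2
        exact this ▸ List.getLast_mem hne'
      exact hsub _ y0 (Finset.mem_toList.mpr (Finset.mem_univ y0)) v hx0
    · have hv : v ∈ seg v := by
        rcases List.mem_cons.mp (hseg3 v) with h' | h'
        · exact absurd h' hne
        · exact h'
      exact hsub _ v (Finset.mem_toList.mpr (Finset.mem_univ v)) v hv

lemma exists_word [Nonempty V] (hG : G.Connected) (h : V → ℕ)
    (hadj : ∀ x y, G.Adj x y → h x ≠ h y) :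
    ∃ w : List V, ∀ c : V → ℕ, ∃ C : ℕ, run G c w = fun v => h v + C := by
  classical
  by_cases hsub : ∀ a b : V, a = b
  · -- single-vertex case
    set x0 := Classical.arbitrary V with hx0
    rcases Nat.eq_zero_or_pos (h x0) with h0 | h0
    · refine ⟨[], fun c => ⟨c x0, ?_⟩⟩
      funext v
      rw [run_nil]
      have hv : v = x0 := hsub v x0
      subst hv
      omega
    · refine ⟨List.replicate (h x0) x0, fun c => ⟨nbrSup G c x0, ?_⟩⟩
      rw [run_replicate G c x0 _ h0]
      funext v
      have hv : v = x0 := hsub v x0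
      subst hv
      simp [Nat.add_comm]
  · have : Nontrivial V := by
      push_neg at hsub
      obtain ⟨a, b, hab⟩ := hsub
      exact ⟨a, b, hab⟩
    obtain ⟨x0, R, hchainR, hlastR, hRne, hcov⟩ := exists_tour G hG
    have hgetLast : R.getLast hRne = x0 := by
      rw [List.getLast?_eq_getLast hRne] at hlastR
      simpa [Option.or] using hlastR
    have hchain'R : List.Chain' G.Adj R :=
      (show List.Chain' G.Adj (x0 :: R) from hchainR).tail
    have hchain'D : List.Chain' G.Adj (R ++ R) := by
      apply hchain'R.append hchain'R
      intro x hx y hy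
      have hxx0 : x = x0 := by
        rw [List.getLast?_eq_getLast hRne] at hx
        simp only [Option.mem_def, Option.some.injEq] at hx
        rw [← hx]
        exact hgetLast
      subst hxx0
      cases R with
      | nil => exact absurd rfl hRne
      | cons b R' =>
        simp only [List.head?_cons, Option.mem_def, Option.some.injEq] at hy
        subst hy
        exact (List.chain_cons.mp hchainR).1
    -- the deterministic wave profile and the build word
    set g : V → ℕ := waveCfg (fun _ => 0) 1 R with hg
    set B : ℕ := Finset.univ.sup g with hB
    have hIT : IsTotal V (fun a b => h a ≤ h b) := ⟨fun a b => le_total (h a) (h b)⟩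
    have hITr : IsTrans V (fun a b => h a ≤ h b) := ⟨fun a b c hab hbc => le_trans hab hbc⟩
    obtain ⟨w1, hw1⟩ := buildAux G h hadj (B + 1) B (Nat.lt_succ_self B)
      (List.insertionSort (fun a b => h a ≤ h b) Finset.univ.toList) g
      ((List.perm_insertionSort _ _).nodup_iff.mpr (Finset.nodup_toList _))
      (List.pairwise_insertionSort _ _)
      (fun v _ => Finset.le_sup (Finset.mem_univ v))
      (fun v hv => absurd ((List.perm_insertionSort _ _).mem_iff.mpr
        (Finset.mem_toList.mpr (Finset.mem_univ v))) hv)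
      (fun u _ v hv => absurd ((List.perm_insertionSort _ _).mem_iff.mpr
        (Finset.mem_toList.mpr (Finset.mem_univ v))) hv)
    refine ⟨(R ++ R) ++ List.replicate (R ++ R).length x0 ++ R ++ w1, fun c => ?_⟩
    -- phase 1 : normalization
    set D := R ++ R with hD
    set M0 : ℕ := Finset.univ.sup c with hM0
    have hM0le : ∀ x, c x ≤ M0 := fun x => Finset.le_sup (Finset.mem_univ x)
    obtain ⟨z, _, hz⟩ := Finset.exists_mem_eq_sup Finset.univ Finset.univ_nonempty c
    obtain ⟨j, hjR, hjz⟩ := List.mem_iff_getElem.mp (hcov z)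
    have hjD : j < D.length := by
      rw [hD, List.length_append]
      omega
    set c1 := run G c D with hc1
    have hlow : ∀ v, M0 + 1 ≤ c1 v := by
      intro v
      have hsplit : run G c D = run G (run G c (D.take (j+1))) (D.drop (j+1)) := by
        rw [← run_append, List.take_append_drop]
      have hzval : M0 ≤ run G c (D.take (j+1)) z := by
        calc M0 = c z := hz
        _ ≤ _ := le_run G c _ z
      have hchainz : List.Chain G.Adj z (D.drop (j+1)) := by
        have h1 : List.Chain' G.Adj (D.drop j) := hchain'D.drop j
        rw [List.drop_eq_getElem_cons hjD] at h1
        have h2 : D[j] = z := by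
          exact (List.getElem_append_left (bs := R) hjR).trans hjz
        simp only [h2] at h1
        exact h1
      have hmem : v ∈ D.drop (j+1) := by
        rw [hD, List.drop_append_of_le_length (by omega)]
        exact List.mem_append.mpr (Or.inr (hcov v))
      have := run_prop G (D.drop (j+1)) z (run G c (D.take (j+1))) M0 hchainz hzval v hmem
      rw [hc1, hsplit]
      exact this
    have hup : ∀ v, c1 v ≤ M0 + D.length := run_upper G hM0le D
    -- phase 2 : tower at x0
    have hK1 : 1 ≤ D.length := by
      rw [hD, List.length_append]
      have : R.length ≠ 0 := fun hr => hRne (List.length_eq_zero_iff.mp hr)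
      omega
    set Cc : ℕ := nbrSup G c1 x0 + D.length with hCc
    have hc2 : run G c1 (List.replicate D.length x0) = Function.update c1 x0 Cc :=
      run_replicate G c1 x0 D.length hK1
    -- phase 3 : wave along R
    have hwavepre1 : Function.update c1 x0 Cc x0 = Cc := by simp
    have hwavepre2 : ∀ v, Function.update c1 x0 Cc v ≤ Cc := by
      intro v
      rcases eq_or_ne v x0 with rfl | hne
      · simp
      · rw [Function.update_of_ne hne]
        have h1 := hup v
        have h2 := hlow x0
        have h3 := self_le_nbrSup G c1 x0
        omega
    have hwave : run G (Function.update c1 x0 Cc) R =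
        waveCfg (Function.update c1 x0 Cc) (Cc + 1) R :=
      run_eq_waveCfg G R x0 _ Cc hchainR hwavepre1 hwavepre2
    have hwave2 : waveCfg (Function.update c1 x0 Cc) (Cc + 1) R = fun x => g x + Cc := by
      rw [waveCfg_congr R (Function.update c1 x0 Cc) (fun _ => Cc) (Cc + 1) (fun v hv => absurd (hcov v) hv)]
      have : (fun _ : V => Cc) = fun x => (fun _ : V => 0) x + Cc := by funext x; simp
      rw [this, show Cc + 1 = 1 + Cc by omega, waveCfg_add, ← hg]
    refine ⟨(B + 1) + Cc, ?_⟩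
    rw [run_append, run_append, run_append, ← hc1, hc2, hwave, hwave2, run_add, hw1]
    funext v
    show (B + 1 + h v) + Cc = h v + (B + 1 + Cc)
    omega

lemma heightProcess_eq_run (h0 : V → ℕ) (X : ℕ → V) (n : ℕ) :
    heightProcess G h0 X n = run G h0 ((List.range n).map X) := by
  induction n with
  | zero => simp [heightProcess]
  | succ n ih =>
    rw [List.range_succ, List.map_append, run_append, ← ih]
    funext x
    by_cases hx : x = X n
    · subst hx
      simp [heightProcess, run, bdStep, nbrSup]
    · simp [heightProcess, run, bdStep, hx]

end BD
theorem stmt14 {V : Type} [Fintype V] [Nonempty V] (G : SimpleGraph V)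
    (hG : G.Connected) (h : V → ℕ) (hh : h ∈ surfaceStates G) :
    ∃ n : ℕ, ∀ htilde ∈ surfaceStates G,
      ∀ {Ω : Type} [MeasurableSpace Ω] (μ : Measure Ω) [IsProbabilityMeasure μ]
        (X : ℕ → Ω → V), IsUniformIID μ X →
        (Fintype.card V : ℝ≥0∞)⁻¹ ^ n ≤
          μ {ω | ∀ x : V, heightProcess G htilde (fun k => X k ω) n x -
              (⨅ y : V, heightProcess G htilde (fun k => X k ω) n y) = h x} := by
  classical
  obtain ⟨hzero, hadj⟩ := hh
  obtain ⟨word, hword⟩ := exists_word G hG h hadj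
  refine ⟨word.length, ?_⟩
  intro htilde _ Ω _ μ _ X hX
  obtain ⟨C, hC⟩ := hword htilde
  have hkey : {ω : Ω | ∀ k < word.length, X k ω = word.getD k (Classical.arbitrary V)} ⊆
      {ω | ∀ x : V, heightProcess G htilde (fun k => X k ω) word.length x -
          (⨅ y : V, heightProcess G htilde (fun k => X k ω) word.length y) = h x} := by
    intro ω hω
    have hmap : (List.range word.length).map (fun k => X k ω) = word := by
      apply List.ext_getElem (by simp)
      intro i h1 h2
      simp only [List.getElem_map, List.getElem_range]
      exact (hω i (by simpa using h2)).trans (List.getD_eq_getElem word _ h2)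
    have hrun : heightProcess G htilde (fun k => X k ω) word.length = fun v => h v + C := by
      rw [heightProcess_eq_run, hmap, hC]
    simp only [Set.mem_setOf_eq, hrun]
    intro x
    obtain ⟨x0, hx0⟩ := hzero
    have h1 : (⨅ y : V, (h y + C)) ≤ h x0 + C := ciInf_le (OrderBot.bddBelow _) x0
    have h2 : C ≤ ⨅ y : V, (h y + C) := le_ciInf fun y => Nat.le_add_left C (h y)
    omega
  calc (Fintype.card V : ℝ≥0∞)⁻¹ ^ word.length
      = μ {ω : Ω | ∀ k < word.length, X k ω = word.getD k (Classical.arbitrary V)} :=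
        (hX.2 word.length (fun k => word.getD k (Classical.arbitrary V))).symm
    _ ≤ _ := measure_mono hkey
end

section
/- For every integer n ≥ 1, with P(k) := ∏_{l=1}^{k−1} (n−l)/n for 1 ≤ k ≤ n (empty product equal to 1), the identity (Σ_{k=1}^{n} k·P(k)) / (Σ_{k=1}^{n} P(k)) = n / ( eⁿ · n^{−n} · Γ(n+1, n) − 1 ) holds, where Γ(n+1, n) := ∫_{n}^{∞} t^{n} e^{−t} dt is the upper incomplete gamma function. (Formula (18) for the nearest-neighbour growth rate γ̃(K_n).) -/
open Finset MeasureTheory Set Filter Real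

private lemma aux_deriv (n : ℕ) (t : ℝ) :
    HasDerivAt (fun t : ℝ => -(Real.exp (-t) * ∑ j ∈ Finset.range (n+1), ((n.factorial:ℝ) / (j.factorial:ℝ)) * t ^ j))
      (t ^ n * Real.exp (-t)) t := by
  have he : HasDerivAt (fun t : ℝ => Real.exp (-t)) (-Real.exp (-t)) t := by
    convert (hasDerivAt_neg t).exp using 1; ring
  have hp : HasDerivAt (fun t : ℝ => ∑ j ∈ Finset.range (n+1), ((n.factorial:ℝ) / (j.factorial:ℝ)) * t ^ j)
      (∑ j ∈ Finset.range (n+1), ((n.factorial:ℝ) / (j.factorial:ℝ)) * (j * t ^ (j-1))) t := by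
    apply HasDerivAt.fun_sum
    intro j _
    exact (hasDerivAt_pow j t).const_mul _
  have key : Real.exp (-t) * (∑ j ∈ Finset.range (n+1), ((n.factorial:ℝ) / (j.factorial:ℝ)) * (j * t ^ (j-1)))
      - Real.exp (-t) * ∑ j ∈ Finset.range (n+1), ((n.factorial:ℝ) / (j.factorial:ℝ)) * t ^ j
      = -(t ^ n * Real.exp (-t)) := by
    rw [← mul_sub]
    have h1 : (∑ j ∈ Finset.range (n+1), ((n.factorial:ℝ) / (j.factorial:ℝ)) * (j * t ^ (j-1)))
        = ∑ j ∈ Finset.range n, ((n.factorial:ℝ) / (j.factorial:ℝ)) * t ^ j := by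
      rw [Finset.sum_range_succ']
      simp only [Nat.cast_zero, zero_mul, mul_zero, add_zero]
      apply Finset.sum_congr rfl
      intro j _
      have h2 : ((n.factorial:ℝ) / ((j+1).factorial:ℝ)) * (j+1) = (n.factorial:ℝ) / (j.factorial:ℝ) := by
        rw [Nat.factorial_succ]
        push_cast
        field_simp
      calc ((n.factorial:ℝ) / ((j+1).factorial)) * ((j+1 : ℕ) * t ^ (j+1-1))
          = (((n.factorial:ℝ) / ((j+1).factorial:ℝ)) * (j+1)) * t ^ j := by push_cast; ring
        _ = ((n.factorial:ℝ) / (j.factorial:ℝ)) * t ^ j := by rw [h2]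
    rw [h1, Finset.sum_range_succ]
    have h3 : ((n.factorial:ℝ) / (n.factorial:ℝ)) = 1 := by
      rw [div_self]; exact_mod_cast Nat.factorial_ne_zero n
    rw [h3]
    ring
  have := (he.mul hp).neg
  refine this.congr_deriv ?_
  linarith [key]

private lemma aux_integral (n : ℕ) (hn : 1 ≤ n) :
    (∫ t in Set.Ioi (n : ℝ), t ^ n * Real.exp (-t))
      = Real.exp (-(n:ℝ)) * ∑ j ∈ Finset.range (n+1), ((n.factorial:ℝ) / (j.factorial:ℝ)) * (n:ℝ) ^ j := by
  have hint : IntegrableOn (fun t : ℝ => t ^ n * Real.exp (-t)) (Set.Ioi (n:ℝ)) := by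
    have h0 : (0:ℝ) < (n:ℝ) + 1 := by positivity
    have h := Real.GammaIntegral_convergent h0
    have hsub : Set.Ioi (n:ℝ) ⊆ Set.Ioi 0 := fun x hx =>
      Set.mem_Ioi.mpr (lt_of_lt_of_le (by exact_mod_cast Nat.pos_of_ne_zero (n := n) (by omega)) (le_of_lt hx))
    have h2 := h.mono_set hsub
    apply h2.congr_fun ?_ measurableSet_Ioi
    intro x hx
    have hx0 : (0:ℝ) < x := hsub hx
    show Real.exp (-x) * x ^ ((n:ℝ) + 1 - 1) = x ^ n * Real.exp (-x)
    rw [add_sub_cancel_right, Real.rpow_natCast]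
    ring
  have hsum : Filter.Tendsto
      (fun t : ℝ => ∑ j ∈ Finset.range (n+1), ((n.factorial:ℝ) / (j.factorial:ℝ)) * (t ^ j * Real.exp (-t)))
      Filter.atTop (nhds 0) := by
    have := tendsto_finset_sum (Finset.range (n+1))
      (fun j (_ : j ∈ Finset.range (n+1)) =>
        (Real.tendsto_pow_mul_exp_neg_atTop_nhds_zero j).const_mul ((n.factorial:ℝ) / (j.factorial:ℝ)))
    simpa using this
  have htend : Filter.Tendsto
      (fun t : ℝ => -(Real.exp (-t) * ∑ j ∈ Finset.range (n+1), ((n.factorial:ℝ) / (j.factorial:ℝ)) * t ^ j))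
      Filter.atTop (nhds 0) := by
    have h2 := hsum.neg
    rw [neg_zero] at h2
    refine h2.congr fun t => ?_
    congr 1
    rw [Finset.mul_sum]
    exact Finset.sum_congr rfl fun j _ => by ring
  have := integral_Ioi_of_hasDerivAt_of_tendsto' (f' := fun t : ℝ => t ^ n * Real.exp (-t))
    (fun x _ => aux_deriv n x) hint htend
  rw [this]
  ring

private lemma aux_prod (n : ℕ) (hn : 1 ≤ n) : ∀ k, 1 ≤ k → k ≤ n →
    (∏ l ∈ Finset.Icc 1 (k - 1), ((n : ℝ) - l) / n) = (n.factorial:ℝ) / (((n-k).factorial:ℝ) * (n:ℝ)^k) := by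
  have hn0 : (n:ℝ) ≠ 0 := by positivity
  intro k hk1 hkn
  induction k with
  | zero => omega
  | succ m ih =>
    rcases Nat.eq_or_lt_of_le hk1 with h1 | h1
    · have hm : m = 0 := by omega
      subst hm
      rw [show (0:ℕ) + 1 - 1 = 0 by rfl, show Finset.Icc 1 0 = ∅ by rfl, Finset.prod_empty]
      have hfac : n.factorial = n * (n-1).factorial := (Nat.mul_factorial_pred (by omega)).symm
      rw [hfac]
      push_cast
      rw [pow_one]
      have : ((n-1).factorial:ℝ) ≠ 0 := by exact_mod_cast Nat.factorial_ne_zero _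
      field_simp
    · have hm1 : 1 ≤ m := by omega
      have hmn : m ≤ n := by omega
      have ihm := ih hm1 hmn
      have hstep : (∏ l ∈ Finset.Icc 1 (m + 1 - 1), ((n : ℝ) - l) / n)
          = (∏ l ∈ Finset.Icc 1 (m - 1), ((n : ℝ) - l) / n) * (((n:ℝ) - m)/n) := by
        rw [Nat.add_sub_cancel, show m = (m-1)+1 by omega, Finset.prod_Icc_succ_top (by omega)]
        rw [show m - 1 + 1 = m by omega]
      rw [hstep, ihm]
      have hf : (n - m).factorial = (n - m) * (n - (m+1)).factorial := by
        rw [show n - (m+1) = (n-m) - 1 by omega]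
        exact (Nat.mul_factorial_pred (by omega)).symm
      have hcast : ((n:ℝ) - m) = ((n - m : ℕ) : ℝ) := by
        rw [Nat.cast_sub hmn]
      have ha : ((n-(m+1)).factorial:ℝ) ≠ 0 := by exact_mod_cast Nat.factorial_ne_zero _
      have hc : ((n-m:ℕ):ℝ) ≠ 0 := by
        have : 0 < n - m := by omega
        exact_mod_cast this.ne'
      have hnp : (n:ℝ)^m ≠ 0 := pow_ne_zero _ hn0
      rw [hf, hcast, Nat.cast_mul, pow_succ, div_mul_div_comm]
      rw [show ((n-m:ℕ):ℝ) * ((n-(m+1)).factorial:ℝ) * (n:ℝ)^m * (n:ℝ)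
            = ((n-m:ℕ):ℝ) * (((n-(m+1)).factorial:ℝ) * ((n:ℝ)^m * (n:ℝ))) from by ring,
          show (n.factorial:ℝ) * ((n-m:ℕ):ℝ) = ((n-m:ℕ):ℝ) * (n.factorial:ℝ) from by ring]
      exact mul_div_mul_left _ _ hc

theorem stmt18 (n : ℕ) (hn : 1 ≤ n) :
    (∑ k ∈ Finset.Icc 1 n, (k : ℝ) * ∏ l ∈ Finset.Icc 1 (k - 1), ((n : ℝ) - l) / n) /
      (∑ k ∈ Finset.Icc 1 n, ∏ l ∈ Finset.Icc 1 (k - 1), ((n : ℝ) - l) / n) =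
    (n : ℝ) /
      (Real.exp n * ((n : ℝ) ^ n)⁻¹ *
        (∫ t in Set.Ioi (n : ℝ), t ^ n * Real.exp (-t)) - 1) := by
  have hn0 : (n:ℝ) ≠ 0 := by positivity
  set f : ℕ → ℝ := fun k => ∏ l ∈ Finset.Icc 1 (k - 1), ((n : ℝ) - l) / n with hf
  have hstep : ∀ k, 1 ≤ k → f (k+1) = f k * (((n:ℝ) - k)/n) := by
    intro k hk
    simp only [hf, Nat.add_sub_cancel]
    rw [show k = (k-1)+1 by omega, Finset.prod_Icc_succ_top (by omega)]
    rw [show k - 1 + 1 = k by omega]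
  have hnum : (∑ k ∈ Finset.Icc 1 n, (k:ℝ) * f k) = n := by
    have hterm : ∀ k : ℕ, 1 ≤ k → (k:ℝ) * f k = (n:ℝ) * f k - (n:ℝ) * f (k+1) := by
      intro k hk
      rw [hstep k hk]
      field_simp
      ring
    rw [← Finset.Ico_add_one_right_eq_Icc, Finset.sum_Ico_eq_sum_range]
    have hc : ∀ i ∈ Finset.range (n + 1 - 1), ((1+i : ℕ):ℝ) * f (1+i)
        = (n:ℝ) * f (1+i) - (n:ℝ) * f (1+(i+1)) := fun i _ => by
      rw [show 1+(i+1) = (1+i)+1 from by omega]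
      exact_mod_cast hterm (1+i) (by omega)
    rw [Finset.sum_congr rfl hc]
    rw [Finset.sum_range_sub' (fun i => (n:ℝ) * f (1+i))]
    have hf1 : f 1 = 1 := by simp [hf]
    have hfn : f (1 + (n + 1 - 1)) = 0 := by
      simp only [hf]
      apply Finset.prod_eq_zero (i := n)
      · simp; omega
      · simp
    rw [hf1, hfn]
    ring
  have hden : (∑ k ∈ Finset.Icc 1 n, f k)
      = ∑ j ∈ Finset.range n, (n.factorial:ℝ) / ((j.factorial:ℝ) * (n:ℝ)^(n-j)) := by
    rw [← Finset.Ico_add_one_right_eq_Icc, Finset.sum_Ico_eq_sum_range]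
    rw [show n + 1 - 1 = n by omega]
    rw [← Finset.sum_range_reflect]
    apply Finset.sum_congr rfl
    intro j hj
    have hjn : j < n := Finset.mem_range.mp hj
    have h2 : f (1 + (n - 1 - j)) = (n.factorial:ℝ) /
        (((n-(1 + (n - 1 - j))).factorial:ℝ) * (n:ℝ)^(1 + (n - 1 - j))) := by
      show (∏ l ∈ Finset.Icc 1 ((1 + (n - 1 - j)) - 1), ((n : ℝ) - l) / n) = _
      exact aux_prod n hn (1 + (n - 1 - j)) (by omega) (by omega)
    rw [h2, show n - (1 + (n - 1 - j)) = j by omega, show 1 + (n - 1 - j) = n - j by omega]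
  rw [aux_integral n hn]
  have hexp : Real.exp (n:ℝ) * Real.exp (-(n:ℝ)) = 1 := by
    rw [← Real.exp_add]; simp
  have hR : Real.exp n * ((n : ℝ) ^ n)⁻¹ *
      (Real.exp (-(n:ℝ)) * ∑ j ∈ Finset.range (n+1), ((n.factorial:ℝ) / (j.factorial:ℝ)) * (n:ℝ) ^ j) - 1
      = ∑ k ∈ Finset.Icc 1 n, f k := by
    rw [hden]
    have h1 : Real.exp n * ((n : ℝ) ^ n)⁻¹ *
        (Real.exp (-(n:ℝ)) * ∑ j ∈ Finset.range (n+1), ((n.factorial:ℝ) / (j.factorial:ℝ)) * (n:ℝ) ^ j)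
        = ∑ j ∈ Finset.range (n+1), ((n.factorial:ℝ) / (j.factorial:ℝ)) * (n:ℝ) ^ j * ((n:ℝ)^n)⁻¹ := by
      rw [show Real.exp (n:ℝ) * ((n : ℝ) ^ n)⁻¹ *
        (Real.exp (-(n:ℝ)) * ∑ j ∈ Finset.range (n+1), ((n.factorial:ℝ) / (j.factorial:ℝ)) * (n:ℝ) ^ j)
        = (Real.exp (n:ℝ) * Real.exp (-(n:ℝ))) * (((n:ℝ)^n)⁻¹ * ∑ j ∈ Finset.range (n+1), ((n.factorial:ℝ) / (j.factorial:ℝ)) * (n:ℝ) ^ j) from by ring,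
        hexp, one_mul, Finset.mul_sum]
      exact Finset.sum_congr rfl fun j _ => by ring
    rw [h1, Finset.sum_range_succ]
    have hlast : ((n.factorial:ℝ) / (n.factorial:ℝ)) * (n:ℝ) ^ n * ((n:ℝ)^n)⁻¹ = 1 := by
      rw [div_self (by exact_mod_cast Nat.factorial_ne_zero n)]
      field_simp
    rw [hlast, add_sub_cancel_right]
    apply Finset.sum_congr rfl
    intro j hj
    have hjn : j < n := Finset.mem_range.mp hj
    have hpow : (n:ℝ)^n = (n:ℝ)^(n-j) * (n:ℝ)^j := by
      rw [← pow_add]; congr 1; omega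
    have hfj : (j.factorial:ℝ) ≠ 0 := by exact_mod_cast Nat.factorial_ne_zero j
    rw [hpow]
    field_simp
  rw [hR, hnum]
end

section
/- As n → ∞, n / ( eⁿ · n^{−n} · Γ(n+1, n) − 1 ) ∼ √(2/π) · n^{1/2}; that is, the limit of n^{1/2} / ( eⁿ · n^{−n} · Γ(n+1, n) − 1 ) as n → ∞ equals √(2/π). (Asymptotics of the nearest-neighbour growth rate γ̃(K_n).) -/
open Filter Topology Set MeasureTheory


lemma aux_nonneg (F F' : ℝ → ℝ) (h0 : F 0 = 0)
    (hd : ∀ s, 0 ≤ s → HasDerivAt F (F' s) s)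
    (h' : ∀ s, 0 ≤ s → 0 ≤ F' s) : ∀ s, 0 ≤ s → 0 ≤ F s := by
  intro s hs
  have hmono : MonotoneOn F (Ici 0) := by
    apply monotoneOn_of_deriv_nonneg (convex_Ici 0)
    · exact fun x hx => (hd x hx).continuousAt.continuousWithinAt
    · intro x hx
      rw [interior_Ici] at hx
      exact (hd x hx.le).differentiableAt.differentiableWithinAt
    · intro x hx
      rw [interior_Ici] at hx
      rw [(hd x hx.le).deriv]
      exact h' x hx.le
  have := hmono (self_mem_Ici) hs hs
  rwa [h0] at this

lemma hd_log (s : ℝ) (hs : 0 ≤ s) :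
    HasDerivAt (fun x : ℝ => Real.log (1 + x)) (1 + s)⁻¹ s := by
  have h : (1 : ℝ) + s ≠ 0 := by positivity
  simpa [Function.comp_def] using (Real.hasDerivAt_log h).comp s ((hasDerivAt_id s).const_add 1)

lemma log_ge (s : ℝ) (hs : 0 ≤ s) : s - s ^ 2 / 2 ≤ Real.log (1 + s) := by
  have := aux_nonneg (fun x => Real.log (1 + x) - x + x ^ 2 / 2)
      (fun x => x ^ 2 / (1 + x)) (by norm_num)
      (fun x hx => by
        have h1 : (1 : ℝ) + x ≠ 0 := by positivity
        have := ((hd_log x hx).sub (hasDerivAt_id x)).add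
          (((hasDerivAt_pow 2 x)).div_const 2)
        refine this.congr_deriv ?_
        field_simp
        ring)
      (fun x hx => by positivity) s hs
  linarith

lemma log_le_cubic (s : ℝ) (hs : 0 ≤ s) :
    Real.log (1 + s) ≤ s - s ^ 2 / 2 + s ^ 3 / 3 := by
  have := aux_nonneg (fun x => x - x ^ 2 / 2 + x ^ 3 / 3 - Real.log (1 + x))
      (fun x => x ^ 3 / (1 + x)) (by norm_num)
      (fun x hx => by
        have h1 : (1 : ℝ) + x ≠ 0 := by positivity
        have := (((hasDerivAt_id x).sub ((hasDerivAt_pow 2 x).div_const 2)).add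
          ((hasDerivAt_pow 3 x).div_const 3)).sub (hd_log x hx)
        refine this.congr_deriv ?_
        field_simp
        ring)
      (fun x hx => by positivity) s hs
  linarith

lemma log_le_frac (s : ℝ) (hs : 0 ≤ s) :
    Real.log (1 + s) ≤ s - s ^ 2 / (2 * (1 + s)) := by
  have := aux_nonneg (fun x => x - x ^ 2 / (2 * (1 + x)) - Real.log (1 + x))
      (fun x => x ^ 2 / (2 * (1 + x) ^ 2) ) (by norm_num)
      (fun x hx => by
        have h1 : (1 : ℝ) + x ≠ 0 := by positivity
        have h2 : (2 : ℝ) * (1 + x) ≠ 0 := by positivity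
        have hq : HasDerivAt (fun y : ℝ => y ^ 2 / (2 * (1 + y)))
            ((2 * x * (2 * (1 + x)) - x ^ 2 * 2) / (2 * (1 + x)) ^ 2) x := by
          have := (hasDerivAt_pow 2 x).div
            (((hasDerivAt_id x).const_add 1).const_mul 2) h2
          simp only [id_eq] at this
          refine this.congr_deriv ?_
          ring
        have := ((hasDerivAt_id x).sub hq).sub (hd_log x hx)
        refine this.congr_deriv ?_
        field_simp
        ring)
      (fun x hx => by positivity) s hs
  linarith


lemma key_eq (n : ℕ) (hn : 1 ≤ n) :
    Real.exp n * ((n : ℝ) ^ n)⁻¹ *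
        (∫ t in Set.Ioi (n : ℝ), t ^ n * Real.exp (-t))
      = Real.sqrt n *
        ∫ u in Set.Ioi (0:ℝ),
          Real.exp (n * Real.log (1 + u / Real.sqrt n) - Real.sqrt n * u) := by
  have h0 : (0:ℝ) < n := by exact_mod_cast hn
  have hs : (0:ℝ) < Real.sqrt n := Real.sqrt_pos.mpr h0
  have hnn : Real.sqrt n * Real.sqrt n = n := Real.mul_self_sqrt h0.le
  -- shift
  have step1 : (∫ t in Set.Ioi (n : ℝ), t ^ n * Real.exp (-t))
      = ∫ x in Set.Ioi (0:ℝ), (x + n) ^ n * Real.exp (-(x + n)) := by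
    have := (measurePreserving_add_right (volume : Measure ℝ) (n:ℝ)).setIntegral_preimage_emb
      (measurableEmbedding_addRight (n:ℝ))
      (fun t => t ^ n * Real.exp (-t)) (Set.Ioi (n:ℝ))
    rw [← this]
    congr 1
    ext x
    simp
  -- scale
  have step2 : (∫ x in Set.Ioi (0:ℝ), (x + n) ^ n * Real.exp (-(x + n)))
      = Real.sqrt n * ∫ u in Set.Ioi (0:ℝ),
          (Real.sqrt n * u + n) ^ n * Real.exp (-(Real.sqrt n * u + n)) := by
    have := integral_comp_mul_left_Ioi
      (fun x => (x + (n:ℝ)) ^ n * Real.exp (-(x + n))) 0 hs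
    rw [mul_zero] at this
    beta_reduce at this
    rw [this, smul_eq_mul, ← mul_assoc, mul_inv_cancel₀ hs.ne', one_mul]
  rw [step1, step2, ← mul_assoc, mul_comm _ (Real.sqrt n), mul_assoc, ← integral_const_mul]
  congr 1
  apply setIntegral_congr_fun measurableSet_Ioi
  intro u hu
  simp only [mem_Ioi] at hu
  dsimp only
  have h1 : (0:ℝ) < 1 + u / Real.sqrt n := by positivity
  have hx : Real.sqrt n * u + n = n * (1 + u / Real.sqrt n) := by
    field_simp
    nlinarith [hnn]
  rw [hx, mul_pow, sub_eq_add_neg, Real.exp_add, Real.exp_nat_mul, Real.exp_log h1]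
  have hne : ((n:ℝ) ^ n) ≠ 0 := by positivity
  rw [show (-((n:ℝ) * (1 + u / Real.sqrt n))) = -(Real.sqrt n * u) + -(n:ℝ) from by
    rw [← hx]; ring, Real.exp_add, Real.exp_neg (n:ℝ)]
  field_simp [Real.exp_ne_zero]

lemma aux_ns (n : ℕ) (hn : 1 ≤ n) (u : ℝ) :
    (n:ℝ) * (u / Real.sqrt n) = Real.sqrt n * u ∧
    (n:ℝ) * (u / Real.sqrt n) ^ 2 = u ^ 2 ∧
    (n:ℝ) * (u / Real.sqrt n) ^ 3 = u ^ 3 * (Real.sqrt n)⁻¹ := by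
  have h0 : (0:ℝ) < n := by exact_mod_cast hn
  have hs : (0:ℝ) < Real.sqrt n := Real.sqrt_pos.mpr h0
  have hnn : Real.sqrt n * Real.sqrt n = n := Real.mul_self_sqrt h0.le
  refine ⟨?_, ?_, ?_⟩
  · field_simp
    linear_combination (-u) * hnn
  · field_simp
    linear_combination (-u ^ 2) * hnn
  · field_simp
    linear_combination (-(u ^ 3)) * hnn

lemma sqrt_nat_atTop : Tendsto (fun n : ℕ => Real.sqrt n) atTop atTop := by
  apply tendsto_atTop_atTop_of_monotone
  · intro a b hab
    exact Real.sqrt_le_sqrt (by exact_mod_cast hab)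
  · intro b
    refine ⟨⌈b ^ 2⌉₊, ?_⟩
    rcases le_or_gt b 0 with hb | hb
    · exact hb.trans (Real.sqrt_nonneg _)
    · exact Real.le_sqrt_of_sq_le (Nat.le_ceil _)

lemma tendsto_C :
    Tendsto (fun n : ℕ => ∫ u in Set.Ioi (0:ℝ),
        Real.exp (n * Real.log (1 + u / Real.sqrt n) - Real.sqrt n * u))
      atTop (𝓝 (Real.sqrt (Real.pi / 2))) := by
  have gauss : (∫ u in Set.Ioi (0:ℝ), Real.exp (-(1/2) * u ^ 2))
      = Real.sqrt (Real.pi / 2) := by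
    rw [integral_gaussian_Ioi]
    rw [show Real.pi / (1/2 : ℝ) = 2 * Real.pi by ring]
    rw [show Real.pi / 2 = 2 * Real.pi / 2 ^ 2 by ring,
      Real.sqrt_div' _ (by positivity), Real.sqrt_sq (by norm_num)]
  rw [← gauss]
  apply tendsto_integral_filter_of_dominated_convergence
    (fun u => Real.exp (-(u ^ 2 / (2 * (1 + u)))))
  · filter_upwards with n
    apply Measurable.aestronglyMeasurable
    exact Real.measurable_exp.comp
      (((Real.measurable_log.comp ((measurable_id.div_const _).const_add 1)).const_mul
        _).sub (measurable_id.const_mul _))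
  · filter_upwards [eventually_ge_atTop 1] with n hn
    rw [ae_restrict_iff' measurableSet_Ioi]
    filter_upwards with u hu
    simp only [mem_Ioi] at hu
    have h0 : (0:ℝ) < n := by exact_mod_cast hn
    have hs : (0:ℝ) < Real.sqrt n := Real.sqrt_pos.mpr h0
    have hs1 : (1:ℝ) ≤ Real.sqrt n := by
      rw [show (1:ℝ) = Real.sqrt 1 by simp]
      exact Real.sqrt_le_sqrt (by exact_mod_cast hn)
    obtain ⟨hns, hns2, hns3⟩ := aux_ns n hn u
    set s := u / Real.sqrt n with hsdef
    have hspos : 0 < s := by positivity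
    rw [Real.norm_eq_abs, abs_of_pos (Real.exp_pos _), Real.exp_le_exp]
    have key : (n:ℝ) * Real.log (1 + s) - Real.sqrt n * u
        ≤ -(u ^ 2 / (2 * (1 + s))) := by
      have h2 : (n:ℝ) * Real.log (1 + s) ≤ n * (s - s ^ 2 / (2 * (1 + s))) :=
        mul_le_mul_of_nonneg_left (log_le_frac s hspos.le) h0.le
      have h3 : (n:ℝ) * (s - s ^ 2 / (2 * (1 + s)))
          = Real.sqrt n * u - u ^ 2 / (2 * (1 + s)) := by
        rw [mul_sub, hns, ← mul_div_assoc, hns2]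
      linarith
    refine key.trans ?_
    have hle : s ≤ u := div_le_self hu.le hs1
    have : u ^ 2 / (2 * (1 + u)) ≤ u ^ 2 / (2 * (1 + s)) := by
      apply div_le_div_of_nonneg_left (by positivity) (by positivity)
      linarith
    linarith
  · have hmaj : IntegrableOn (fun u : ℝ => Real.exp (1/2) * Real.exp (-(1/2) * u))
        (Set.Ioi (0:ℝ)) := (exp_neg_integrableOn_Ioi 0 (by norm_num)).const_mul _
    apply Integrable.mono hmaj
    · apply Measurable.aestronglyMeasurable
      exact Real.measurable_exp.comp
        (((measurable_id.pow_const 2).div ((measurable_id.const_add 1).const_mul 2)).neg)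
    · rw [ae_restrict_iff' measurableSet_Ioi]
      filter_upwards with u hu
      simp only [mem_Ioi] at hu
      rw [Real.norm_eq_abs, abs_of_pos (Real.exp_pos _), Real.norm_eq_abs,
        abs_of_pos (by positivity), ← Real.exp_add, Real.exp_le_exp]
      have : (u - 1) / 2 ≤ u ^ 2 / (2 * (1 + u)) := by
        rw [div_le_div_iff₀ (by norm_num) (by positivity)]
        nlinarith
      linarith
  · rw [ae_restrict_iff' measurableSet_Ioi]
    filter_upwards with u hu
    simp only [mem_Ioi] at hu
    apply (Real.continuous_exp.continuousAt.tendsto).comp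
    have hupper : Tendsto (fun n : ℕ => -(1/2 : ℝ) * u ^ 2 + u ^ 3 / 3 * (Real.sqrt n)⁻¹)
        atTop (𝓝 (-(1/2) * u ^ 2)) := by
      have h1 := sqrt_nat_atTop.inv_tendsto_atTop
      have h2 := (tendsto_const_nhds (x := u ^ 3 / 3) (f := atTop (α := ℕ))).mul h1
      rw [mul_zero] at h2
      have h3 := (tendsto_const_nhds (x := -(1/2 : ℝ) * u ^ 2) (f := atTop (α := ℕ))).add h2
      rw [add_zero] at h3
      exact h3
    apply tendsto_of_tendsto_of_tendsto_of_le_of_le' tendsto_const_nhds hupper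
    · filter_upwards [eventually_ge_atTop 1] with n hn
      have h0 : (0:ℝ) < n := by exact_mod_cast hn
      obtain ⟨hns, hns2, hns3⟩ := aux_ns n hn u
      have hs : (0:ℝ) < Real.sqrt n := Real.sqrt_pos.mpr h0
      set s := u / Real.sqrt n with hsdef
      have hspos : 0 < s := by positivity
      have h2 : (n:ℝ) * (s - s ^ 2 / 2) ≤ n * Real.log (1 + s) :=
        mul_le_mul_of_nonneg_left (log_ge s hspos.le) h0.le
      have h3 : (n:ℝ) * (s - s ^ 2 / 2) = Real.sqrt n * u - u ^ 2 / 2 := by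
        rw [mul_sub, hns, ← mul_div_assoc, hns2]
      linarith
    · filter_upwards [eventually_ge_atTop 1] with n hn
      have h0 : (0:ℝ) < n := by exact_mod_cast hn
      obtain ⟨hns, hns2, hns3⟩ := aux_ns n hn u
      have hs : (0:ℝ) < Real.sqrt n := Real.sqrt_pos.mpr h0
      set s := u / Real.sqrt n with hsdef
      have hspos : 0 < s := by positivity
      have h2 : (n:ℝ) * Real.log (1 + s) ≤ n * (s - s ^ 2 / 2 + s ^ 3 / 3) :=
        mul_le_mul_of_nonneg_left (log_le_cubic s hspos.le) h0.le
      have h3 : (n:ℝ) * (s - s ^ 2 / 2 + s ^ 3 / 3)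
          = Real.sqrt n * u - u ^ 2 / 2 + u ^ 3 / 3 * (Real.sqrt n)⁻¹ := by
        rw [mul_add, mul_sub, hns, ← mul_div_assoc, hns2, ← mul_div_assoc, hns3]
        ring
      linarith

theorem stmt19 :
    Tendsto (fun n : ℕ => Real.sqrt n /
        (Real.exp n * ((n : ℝ) ^ n)⁻¹ *
          (∫ t in Set.Ioi (n : ℝ), t ^ n * Real.exp (-t)) - 1))
      atTop (𝓝 (Real.sqrt (2 / Real.pi))) := by
  set C : ℕ → ℝ := fun n => ∫ u in Set.Ioi (0:ℝ),
      Real.exp (n * Real.log (1 + u / Real.sqrt n) - Real.sqrt n * u) with hCdef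
  have hinv : Tendsto (fun n : ℕ => (Real.sqrt n)⁻¹) atTop (𝓝 0) :=
    sqrt_nat_atTop.inv_tendsto_atTop
  have hD : Tendsto (fun n : ℕ => C n - (Real.sqrt n)⁻¹) atTop
      (𝓝 (Real.sqrt (Real.pi / 2))) := by
    have := tendsto_C.sub hinv
    rwa [sub_zero] at this
  have hne : Real.sqrt (Real.pi / 2) ≠ 0 := by
    have := Real.pi_pos
    positivity
  have hlim : Tendsto (fun n : ℕ => (C n - (Real.sqrt n)⁻¹)⁻¹) atTop
      (𝓝 (Real.sqrt (Real.pi / 2))⁻¹) := hD.inv₀ hne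
  have hval : (Real.sqrt (Real.pi / 2))⁻¹ = Real.sqrt (2 / Real.pi) := by
    rw [← Real.sqrt_inv, inv_div]
  rw [← hval]
  apply hlim.congr'
  filter_upwards [eventually_ge_atTop 1] with n hn
  have h0 : (0:ℝ) < n := by exact_mod_cast hn
  have hs : (0:ℝ) < Real.sqrt n := Real.sqrt_pos.mpr h0
  rw [key_eq n hn]
  have : C n - (Real.sqrt n)⁻¹ = (Real.sqrt n * C n - 1) / Real.sqrt n := by
    field_simp
  rw [this, inv_div]
end
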